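/- arXiv:1802.00317 — 2 statements merged into one kernel-verified Lean document; each statement's English description precedes it below -/
import Mathlib

section
/- Let 𝒯 be a set of MUL-trees, each with more than one leaf, with label sets contained in a finite species set X. For any integer k, there exists a beaded tree on X with a bead at the root and reticulation number k that weakly displays every MUL-tree in 𝒯 if and only if there exists a beaded tree on X with reticulation number k−1 that weakly displays every MUL-tree in F1(𝒯). -/
/-!
Common formal framework for MUL-trees, phylogenetic networks, beaded trees,
duplication trees, weak embeddings and related operations, following
van Iersel, Janssen, Jones, Murakami, Zeh,
"Polynomial-Time Algorithms for Phylogenetic Inference Problems involving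
duplication and reticulation".

All graphs are directed multigraphs on natural-number vertices, given by a
finite vertex set, an edge-multiplicity function and a (partial) leaf
labelling by species (also natural numbers).
-/

open scoped Classical

structure DG where
  verts : Finset ℕ
  mult : ℕ → ℕ → ℕ
  label : ℕ → Option ℕ

namespace DG

/-- An arc is a pair of endpoints together with the index of the parallel copy. -/
abbrev Arc := ℕ × ℕ × ℕ

def Adj (G : DG) (u v : ℕ) : Prop := 0 < G.mult u v

def outDeg (G : DG) (u : ℕ) : ℕ := ∑ v ∈ G.verts, G.mult u v
def inDeg (G : DG) (v : ℕ) : ℕ := ∑ u ∈ G.verts, G.mult u v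

/-- `G.Reaches u v` : `u` is an ancestor of `v` (possibly `u = v`). -/
def Reaches (G : DG) : ℕ → ℕ → Prop := Relation.ReflTransGen G.Adj
/-- `G.SReaches u v` : `u` is a strict ancestor of `v` (in an acyclic graph). -/
def SReaches (G : DG) : ℕ → ℕ → Prop := Relation.TransGen G.Adj
def Acyclic (G : DG) : Prop := ∀ v, ¬ G.SReaches v v

def IsRoot (G : DG) (v : ℕ) : Prop := v ∈ G.verts ∧ G.inDeg v = 0 ∧ G.outDeg v = 1
def IsLeafNode (G : DG) (v : ℕ) : Prop := v ∈ G.verts ∧ G.inDeg v = 1 ∧ G.outDeg v = 0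
def IsTreeNode (G : DG) (v : ℕ) : Prop := v ∈ G.verts ∧ G.inDeg v = 1 ∧ G.outDeg v = 2
def IsRetic (G : DG) (v : ℕ) : Prop := v ∈ G.verts ∧ G.inDeg v = 2 ∧ G.outDeg v = 1
def IsDupNode (G : DG) (v : ℕ) : Prop := v ∈ G.verts ∧ G.inDeg v = 1 ∧ G.outDeg v = 1

/-- The reticulation number: the number of reticulation nodes. -/
def reticNum (G : DG) : ℕ := (G.verts.filter (fun v => G.inDeg v = 2 ∧ G.outDeg v = 1)).card
/-- The duplication number: the number of duplication nodes. -/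
def dupNum (G : DG) : ℕ := (G.verts.filter (fun v => G.inDeg v = 1 ∧ G.outDeg v = 1)).card
/-- The number of beads (counted by their bottom nodes). -/
noncomputable def beadNum (G : DG) : ℕ :=
  (G.verts.filter (fun v => ∃ u ∈ G.verts, G.mult u v = 2)).card

def Supported (G : DG) : Prop := ∀ u v, G.Adj u v → u ∈ G.verts ∧ v ∈ G.verts
/-- Exactly the leaves carry labels. -/
def LabelsOnLeaves (G : DG) : Prop := ∀ v, (∃ x, G.label v = some x) ↔ G.IsLeafNode v

/-- The number of leaves (= labelled nodes). -/
def numLeaves (G : DG) : ℕ := (G.verts.filter (fun v => (G.label v).isSome)).card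

/-- A multi-labelled tree (MUL-tree) with labels contained in `X`. -/
structure IsMulTree (X : Finset ℕ) (G : DG) : Prop where
  root : ∃! r, G.IsRoot r
  nodes : ∀ v ∈ G.verts, G.IsRoot v ∨ G.IsTreeNode v ∨ G.IsLeafNode v
  acyclic : G.Acyclic
  simple : ∀ u v, G.mult u v ≤ 1
  supported : G.Supported
  labels : G.LabelsOnLeaves
  labelsSub : ∀ v x, G.label v = some x → x ∈ X

/-- A rooted binary phylogenetic network on `X` (parallel edges allowed). -/
structure IsNetwork (X : Finset ℕ) (G : DG) : Prop where
  root : ∃! r, G.IsRoot r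
  nodes : ∀ v ∈ G.verts, G.IsRoot v ∨ G.IsTreeNode v ∨ G.IsRetic v ∨ G.IsLeafNode v
  acyclic : G.Acyclic
  supported : G.Supported
  labels : G.LabelsOnLeaves
  labelsSub : ∀ v x, G.label v = some x → x ∈ X
  labelsOnto : ∀ x ∈ X, ∃! v, G.label v = some x

/-- A duplication tree on `X`. -/
structure IsDupTree (X : Finset ℕ) (G : DG) : Prop where
  root : ∃! r, G.IsRoot r
  nodes : ∀ v ∈ G.verts, G.IsRoot v ∨ G.IsTreeNode v ∨ G.IsDupNode v ∨ G.IsLeafNode v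
  acyclic : G.Acyclic
  simple : ∀ u v, G.mult u v ≤ 1
  supported : G.Supported
  labels : G.LabelsOnLeaves
  labelsSub : ∀ v x, G.label v = some x → x ∈ X
  labelsOnto : ∀ x ∈ X, ∃! v, G.label v = some x

/-- A beaded tree: a phylogenetic network in which every reticulation node is
the bottom node of a bead (a pair of parallel edges). -/
def IsBeadedTree (X : Finset ℕ) (G : DG) : Prop :=
  IsNetwork X G ∧ ∀ v ∈ G.verts, G.inDeg v = 2 → ∃ u, G.mult u v = 2

def ArcOK (G : DG) (e : Arc) : Prop := e.2.2 < G.mult e.1 e.2.1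

/-- `G.IsWalk p a b` : `p` is a (nonempty) directed path of arcs from `a` to `b`. -/
def IsWalk (G : DG) (p : List Arc) (a b : ℕ) : Prop :=
  p ≠ [] ∧ (∀ e ∈ p, G.ArcOK e) ∧
  List.Chain' (fun e f : Arc => e.2.1 = f.1) p ∧
  p.head?.map Prod.fst = some a ∧
  p.getLast?.map (fun e => e.2.1) = some b

/-- `v` is a node visited by the walk `p`. -/
def OnWalk (p : List Arc) (v : ℕ) : Prop := ∃ e ∈ p, e.1 = v ∨ e.2.1 = v

/-- A weak embedding of a MUL-tree `T` into a network `N`: nodes map to nodes,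
edges map to directed paths and the two paths out of an internal node start
with different out-edges. -/
def WeakEmbedding (T N : DG) (h : ℕ → ℕ) (hE : ℕ → ℕ → List Arc) : Prop :=
  (∀ v ∈ T.verts, h v ∈ N.verts) ∧
  (∀ v, T.IsLeafNode v → N.IsLeafNode (h v) ∧ N.label (h v) = T.label v) ∧
  (∀ u v, T.Adj u v → N.IsWalk (hE u v) (h u) (h v)) ∧
  (∀ x y y', T.Adj x y → T.Adj x y' → y ≠ y' → (hE x y).head? ≠ (hE x y').head?)

/-- `N.Displays T` : `N` weakly displays `T`. -/
def Displays (N T : DG) : Prop := ∃ h hE, WeakEmbedding T N h hE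

/-- `x` is a least common ancestor of `y` and `z`. -/
def IsLCA (G : DG) (x y z : ℕ) : Prop :=
  G.Reaches x y ∧ G.Reaches x z ∧
  ∀ w, G.SReaches x w → ¬ (G.Reaches w y ∧ G.Reaches w z)

/-- A duplication mapping from a MUL-tree `T` to a duplication tree `D`. -/
def DupMapping (T D : DG) (M : ℕ → ℕ) : Prop :=
  (∀ v, T.IsLeafNode v → D.IsLeafNode (M v) ∧ D.label (M v) = T.label v) ∧
  (∀ u v, T.Adj u v → D.SReaches (M u) (M v)) ∧
  (∀ u v v', T.Adj u v → T.Adj u v' → v ≠ v' →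
    D.IsLCA (M u) (M v) (M v') ∨ D.IsDupNode (M u))

/-- `D.ConsistentWith T` : there is a duplication mapping from `T` to `D`. -/
def ConsistentWith (D T : DG) : Prop := ∃ M, DupMapping T D M

/-- A solution to Beaded Tree on `𝒯`: a beaded tree on `X` weakly displaying
every MUL-tree of `𝒯`. -/
def Solution (X : Finset ℕ) (Ts : Set DG) (B : DG) : Prop :=
  IsBeadedTree X B ∧ ∀ T ∈ Ts, B.Displays T

/-- An optimal solution: minimum reticulation number among all solutions. -/
def OptSolution (X : Finset ℕ) (Ts : Set DG) (B : DG) : Prop :=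
  Solution X Ts B ∧ ∀ B', Solution X Ts B' → B.reticNum ≤ B'.reticNum

/-- Number of beads traversed by a walk. -/
def beadsOnWalk (G : DG) (p : List Arc) : ℕ :=
  p.countP (fun e => decide (G.mult e.1 e.2.1 = 2))

/-- Number of duplication nodes traversed by a walk (as arc sources). -/
def dupsOnWalk (G : DG) (p : List Arc) : ℕ :=
  p.countP (fun e => decide (G.inDeg e.1 = 1 ∧ G.outDeg e.1 = 1))

/-- The bead depth: the maximum number of beads on any directed path. -/
noncomputable def beadDepth (G : DG) : ℕ :=
  sSup {n | ∃ p a b, G.IsWalk p a b ∧ G.beadsOnWalk p = n}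

/-- A solution to Beaded Tree Depth of minimum bead depth. -/
def DepthOptSolution (X : Finset ℕ) (Ts : Set DG) (B : DG) : Prop :=
  Solution X Ts B ∧ ∀ B', Solution X Ts B' → B.beadDepth ≤ B'.beadDepth

/-- The child of the root is the top node of a bead. -/
def HasBeadAtRoot (G : DG) : Prop :=
  ∃ r u v, G.IsRoot r ∧ G.Adj r u ∧ G.mult u v = 2

/-- `B` is obtained from `B'` by inserting a new bead `(u,v)` between the root
`r` of `B'` and its child `a`.  Equivalently, `B'` is obtained from `B` by
deleting `u` and `v` and adding an edge from the root to the child of `v`. -/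
def AddBeadAtRoot (B' B : DG) : Prop :=
  ∃ r a u v, B'.IsRoot r ∧ B'.Adj r a ∧ u ∉ B'.verts ∧ v ∉ B'.verts ∧ u ≠ v ∧
    B.verts = insert u (insert v B'.verts) ∧
    B.label = (fun w => if w = u ∨ w = v then none else B'.label w) ∧
    B.mult = (fun s t =>
      if s = r ∧ t = a then 0
      else if s = r ∧ t = u then 1
      else if s = u ∧ t = v then 2
      else if s = v ∧ t = a then 1
      else if s = u ∨ s = v ∨ t = u ∨ t = v then 0
      else B'.mult s t)

/-- `N` is obtained by joining `N1` and `N2`: the two roots are identified into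
a single node `u`, which becomes the child of a new root `r`.  The embeddings
`f1`, `f2` realise the copies of `N1` and `N2` inside `N`. -/
def IsJoinOf (N N1 N2 : DG) : Prop :=
  ∃ (f1 f2 : ℕ → ℕ) (r u : ℕ),
    N.IsRoot r ∧ u ∈ N.verts ∧ N.mult r u = 1 ∧
    Set.InjOn f1 N1.verts ∧ Set.InjOn f2 N2.verts ∧
    (∀ v, N1.IsRoot v → f1 v = u) ∧ (∀ v, N2.IsRoot v → f2 v = u) ∧
    (∀ w, w ∈ N.verts ↔ (w = r ∨ (∃ v ∈ N1.verts, f1 v = w) ∨ (∃ v ∈ N2.verts, f2 v = w))) ∧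
    (∀ v1 ∈ N1.verts, ∀ v2 ∈ N2.verts, f1 v1 = f2 v2 → N1.IsRoot v1 ∧ N2.IsRoot v2) ∧
    (∀ v ∈ N1.verts, f1 v ≠ r) ∧ (∀ v ∈ N2.verts, f2 v ≠ r) ∧
    (∀ a ∈ N1.verts, ∀ b ∈ N1.verts, N.mult (f1 a) (f1 b) = N1.mult a b) ∧
    (∀ a ∈ N2.verts, ∀ b ∈ N2.verts, N.mult (f2 a) (f2 b) = N2.mult a b) ∧
    (∀ a b, N.Adj a b →
      (a = r ∧ b = u) ∨
      (∃ a' ∈ N1.verts, ∃ b' ∈ N1.verts, f1 a' = a ∧ f1 b' = b ∧ N1.Adj a' b') ∨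
      (∃ a' ∈ N2.verts, ∃ b' ∈ N2.verts, f2 a' = a ∧ f2 b' = b ∧ N2.Adj a' b')) ∧
    (∀ v ∈ N1.verts, N.label (f1 v) = N1.label v) ∧
    (∀ v ∈ N2.verts, N.label (f2 v) = N2.label v) ∧
    N.label r = none

/-- Delete a node and all incident edges. -/
def deleteNode (G : DG) (v : ℕ) : DG where
  verts := G.verts.erase v
  mult := fun a b => if a = v ∨ b = v then 0 else G.mult a b
  label := fun a => if a = v then none else G.label a

/-- Suppress an in-degree-1 out-degree-1 node `v` with parent `p` and child `c`. -/
def suppressNode (G : DG) (v p c : ℕ) : DG where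
  verts := G.verts.erase v
  mult := fun a b =>
    if a = v ∨ b = v then 0
    else if a = p ∧ b = c then G.mult a b + 1
    else G.mult a b
  label := fun a => if a = v then none else G.label a

/-- One step of the restriction procedure for label set `S`: delete a leaf
labelled in `S` or an unlabelled node of out-degree 0, or suppress an
unlabelled node of in-degree 1 and out-degree 1. -/
inductive RStep (S : Finset ℕ) : DG → DG → Prop
  | del (G : DG) (v : ℕ) : v ∈ G.verts →
      ((∃ x ∈ S, G.label v = some x) ∨ (G.label v = none ∧ G.outDeg v = 0)) →
      RStep S G (G.deleteNode v)
  | suppress (G : DG) (v p c : ℕ) : v ∈ G.verts → G.label v = none →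
      G.mult p v = 1 → G.inDeg v = 1 → G.mult v c = 1 → G.outDeg v = 1 →
      RStep S G (G.suppressNode v p c)

/-- `Restricts S G G'` : `G' = G ∖ S`, i.e. `G'` is obtained from `G` by
deleting all leaves labelled in `S` and exhaustively deleting unlabelled nodes
of out-degree 0 and suppressing in-degree-1 out-degree-1 nodes. -/
def Restricts (S : Finset ℕ) (G G' : DG) : Prop :=
  Relation.ReflTransGen (RStep S) G G' ∧ ∀ H, ¬ RStep S G' H

/-- `𝒯 ∖ S` for a set of MUL-trees (empty results discarded). -/
def SetRestrict (S : Finset ℕ) (Ts : Set DG) : Set DG :=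
  {T' | T'.verts.Nonempty ∧ ∃ T ∈ Ts, Restricts S T T'}

/-- The member of the depth-1 forest of `T` keeping `y` and discarding the
subtree rooted at `y'` (here `r` is the root, `x` its child, `y,y'` the
children of `x`, which is suppressed). -/
noncomputable def f1del (T : DG) (r x y y' : ℕ) : DG where
  verts := (T.verts.filter (fun v => ¬ T.Reaches y' v)).erase x
  mult := fun a b =>
    if a = r ∧ b = y then 1
    else if a = x ∨ b = x ∨ T.Reaches y' a ∨ T.Reaches y' b then 0
    else T.mult a b
  label := fun v => if v = x ∨ T.Reaches y' v then none else T.label v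

/-- `T'` is one of the two members of the depth-1 forest `F1(T)`. -/
def InF1 (T T' : DG) : Prop :=
  ∃ r x y y', T.IsRoot r ∧ T.Adj r x ∧ T.Adj x y ∧ T.Adj x y' ∧ y ≠ y' ∧
    T' = f1del T r x y y'

/-- `F1(𝒯)`. -/
def F1Set (Ts : Set DG) : Set DG := {T' | ∃ T ∈ Ts, InF1 T T'}

/-- Two species labels occur in the same member of `F1(𝒯)`. -/
def SplitRel (Ts : Set DG) (a b : ℕ) : Prop :=
  ∃ T' ∈ F1Set Ts, (∃ u, T'.label u = some a) ∧ (∃ v, T'.label v = some b)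

/-- `S` is one of the classes of the split partition of `X` for `𝒯`. -/
def SplitPart (X : Finset ℕ) (Ts : Set DG) (S : Finset ℕ) : Prop :=
  ∃ a ∈ X, S = X.filter (fun b => Relation.EqvGen (SplitRel Ts) a b)

end DG

/-!
Cutting the bead out of `r → u ⇉ v → a` (and joining `r` to `a`) removes exactly one
reticulation, and inserting one below the root adds one. Under a weak embedding of `T`, every
node other than the root `rT` of `T` and its child `x` lands strictly below the bead: `r` has no
parent, `u` is only reached from `r`, and `v` has a single out-arc, so it can neither be a leaf
nor the image of a branching node. Hence the embedding restricts to either member of `F1(T)` once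
the new root edge is sent along a root path. Conversely, embeddings of both members of `F1(T)`
glue to one of `T` by sending `x` to `u` and routing the two edges out of `x` through the two
parallel arcs of the bead.
-/

namespace DG

section Degrees

variable {G H : DG} {s t w : ℕ}

lemma mult_eq_zero_of_left_notMem (hS : G.Supported) (hs : s ∉ G.verts) : G.mult s t = 0 :=
  Nat.eq_zero_of_not_pos fun h => hs (hS s t h).1

lemma mult_eq_zero_of_right_notMem (hS : G.Supported) (ht : t ∉ G.verts) : G.mult s t = 0 :=
  Nat.eq_zero_of_not_pos fun h => ht (hS s t h).2

lemma mult_le_inDeg (hs : s ∈ G.verts) : G.mult s w ≤ G.inDeg w :=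
  Finset.single_le_sum (f := fun q => G.mult q w) (fun _ _ => Nat.zero_le _) hs

lemma mult_le_outDeg (ht : t ∈ G.verts) : G.mult w t ≤ G.outDeg w :=
  Finset.single_le_sum (f := fun q => G.mult w q) (fun _ _ => Nat.zero_le _) ht

lemma mult_add_mult_le_inDeg {q : ℕ} (hs : s ∈ G.verts) (hq : q ∈ G.verts) (hne : q ≠ s) :
    G.mult s w + G.mult q w ≤ G.inDeg w := by
  rw [← Finset.sum_pair (f := fun p => G.mult p w) hne.symm]
  exact Finset.sum_le_sum_of_subset (Finset.insert_subset hs (by simpa using hq))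

lemma mult_add_mult_le_outDeg {q : ℕ} (ht : t ∈ G.verts) (hq : q ∈ G.verts) (hne : q ≠ t) :
    G.mult w t + G.mult w q ≤ G.outDeg w := by
  rw [← Finset.sum_pair (f := fun p => G.mult w p) hne.symm]
  exact Finset.sum_le_sum_of_subset (Finset.insert_subset ht (by simpa using hq))

lemma exists_adj_of_inDeg_pos (h : 0 < G.inDeg w) : ∃ s ∈ G.verts, G.Adj s w :=
  Finset.sum_pos_iff.mp h

lemma exists_adj_of_outDeg_pos (h : 0 < G.outDeg w) : ∃ t ∈ G.verts, G.Adj w t :=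
  Finset.sum_pos_iff.mp h

lemma mult_eq_zero_of_inDeg_le (hS : G.Supported) (hs : s ∈ G.verts)
    (h : G.inDeg w ≤ G.mult s w) {q : ℕ} (hq : q ≠ s) : G.mult q w = 0 := by
  by_cases hqv : q ∈ G.verts
  · have := mult_add_mult_le_inDeg (w := w) hs hqv hq
    omega
  · exact mult_eq_zero_of_left_notMem hS hqv

lemma mult_eq_zero_of_outDeg_le (hS : G.Supported) (ht : t ∈ G.verts)
    (h : G.outDeg w ≤ G.mult w t) {q : ℕ} (hq : q ≠ t) : G.mult w q = 0 := by
  by_cases hqv : q ∈ G.verts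
  · have := mult_add_mult_le_outDeg (w := w) ht hqv hq
    omega
  · exact mult_eq_zero_of_right_notMem hS hqv

lemma inDeg_eq_mult (hs : s ∈ G.verts) (h : ∀ q, q ≠ s → G.mult q w = 0) :
    G.inDeg w = G.mult s w :=
  Finset.sum_eq_single_of_mem s hs fun q _ hq => h q hq

lemma outDeg_eq_mult (ht : t ∈ G.verts) (h : ∀ q, q ≠ t → G.mult w q = 0) :
    G.outDeg w = G.mult w t :=
  Finset.sum_eq_single_of_mem t ht fun q _ hq => h q hq

lemma eq_of_adj_of_inDeg_eq_one (hS : G.Supported) (hw : G.inDeg w = 1) {q : ℕ}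
    (hs : G.Adj s w) (hq : G.Adj q w) : q = s := by
  by_contra hne
  have := mult_eq_zero_of_inDeg_le hS (hS s w hs).1 (by rw [hw]; exact hs) hne
  exact absurd hq (by rw [Adj, this]; omega)

lemma exists_child_of_outDeg_eq_one (hS : G.Supported) (h : G.outDeg w = 1) :
    ∃ c, G.mult w c = 1 ∧ ∀ t, t ≠ c → G.mult w t = 0 := by
  obtain ⟨c, hc, hpos⟩ := exists_adj_of_outDeg_pos (h ▸ Nat.one_pos)
  have hle : G.outDeg w ≤ G.mult w c := by rw [h]; exact hpos
  exact ⟨c, le_antisymm (h ▸ mult_le_outDeg hc) hpos,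
    fun _ => mult_eq_zero_of_outDeg_le hS hc hle⟩

lemma inDeg_eq_of_subset (hsub : H.verts ⊆ G.verts)
    (hmult : ∀ q ∈ H.verts, H.mult q w = G.mult q w)
    (hzero : ∀ q ∈ G.verts, q ∉ H.verts → G.mult q w = 0) : H.inDeg w = G.inDeg w :=
  (Finset.sum_congr rfl hmult).trans (Finset.sum_subset hsub hzero)

lemma outDeg_eq_of_subset (hsub : H.verts ⊆ G.verts)
    (hmult : ∀ q ∈ H.verts, H.mult w q = G.mult w q)
    (hzero : ∀ q ∈ G.verts, q ∉ H.verts → G.mult w q = 0) : H.outDeg w = G.outDeg w :=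
  (Finset.sum_congr rfl hmult).trans (Finset.sum_subset hsub hzero)

lemma arc_eq_of_outDeg_eq_one (hS : G.Supported) (h : G.outDeg w = 1) {e e' : Arc}
    (he : G.ArcOK e) (he' : G.ArcOK e') (h1 : e.1 = w) (h1' : e'.1 = w) : e = e' := by
  obtain ⟨c, hc, hc0⟩ := exists_child_of_outDeg_eq_one hS h
  have key : ∀ f : Arc, G.ArcOK f → f.1 = w → f = (w, c, 0) := by
    rintro ⟨_, t, i⟩ hf rfl
    unfold ArcOK at hf
    obtain rfl : t = c := by_contra fun htc => by simp [hc0 t htc] at hf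
    obtain rfl : i = 0 := by simp only [hc] at hf; omega
    rfl
  rw [key e he h1, key e' he' h1']

lemma mult_eq_zero_of_inDeg_eq_zero (hS : G.Supported) {q : ℕ}
    (h : G.inDeg w = 0) : G.mult q w = 0 := by
  by_cases hq : q ∈ G.verts
  · exact Nat.le_zero.mp (h ▸ mult_le_inDeg hq)
  · exact mult_eq_zero_of_left_notMem hS hq

lemma exists_two_children (hsimple : ∀ s t, G.mult s t ≤ 1)
    (h : G.outDeg w = 2) : ∃ c c', c ≠ c' ∧ G.Adj w c ∧ G.Adj w c' := by
  obtain ⟨c, hc, hwc⟩ := exists_adj_of_outDeg_pos (h ▸ Nat.two_pos)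
  by_contra! hno
  have := outDeg_eq_mult hc fun t ht => Nat.eq_zero_of_not_pos (hno t c ht · hwc)
  have := hsimple w c
  omega

end Degrees

section Reachability

variable {G H : DG} {r s t w : ℕ}

noncomputable def numAncestors (G : DG) (w : ℕ) : ℕ := (G.verts.filter (G.SReaches · w)).card

lemma numAncestors_lt_of_adj (hA : G.Acyclic) (hS : G.Supported) (h : G.Adj s t) :
    G.numAncestors s < G.numAncestors t := by
  refine Finset.card_lt_card ⟨fun z hz => ?_, fun hsub => ?_⟩
  · rw [Finset.mem_filter] at hz ⊢
    exact ⟨hz.1, hz.2.tail h⟩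
  · have := hsub (Finset.mem_filter.mpr ⟨(hS s t h).1, Relation.TransGen.single h⟩)
    exact hA s (Finset.mem_filter.mp this).2

lemma acyclic_of_forall_adj_lt (f : ℕ → ℕ) (hf : ∀ s t, G.Adj s t → f s < f t) : G.Acyclic := by
  have key : ∀ s t, G.SReaches s t → f s < f t := fun s t h => by
    induction h with
    | single h => exact hf _ _ h
    | tail _ h ih => exact ih.trans (hf _ _ h)
  exact fun w hw => lt_irrefl _ (key w w hw)

lemma acyclic_of_forall_adj_sreaches (hA : G.Acyclic) (h : ∀ s t, H.Adj s t → G.SReaches s t) :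
    H.Acyclic := by
  have key : ∀ s t, H.SReaches s t → G.SReaches s t := fun s t hst => by
    induction hst with
    | single hst => exact h _ _ hst
    | tail _ hst ih => exact ih.trans (h _ _ hst)
  exact fun w hw => hA w (key w w hw)

lemma eq_of_reaches_of_mult_eq_zero (h : ∀ q, G.mult q r = 0) (hs : G.Reaches s r) : s = r := by
  rcases hs.cases_tail with rfl | ⟨q, -, hq⟩
  · rfl
  · exact absurd (h q) (Nat.pos_iff_ne_zero.mp hq)

lemma transGen_of_inDeg_pos (hA : G.Acyclic) (hS : G.Supported)
    (hin : ∀ w ∈ G.verts, w ≠ r → 0 < G.inDeg w) (hw : w ∈ G.verts) (hwr : w ≠ r) :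
    Relation.TransGen G.Adj r w := by
  induction hn : G.numAncestors w using Nat.strong_induction_on generalizing w with
  | _ n ih =>
    obtain ⟨q, hq, hqw⟩ := exists_adj_of_inDeg_pos (hin w hw hwr)
    by_cases hqr : q = r
    · exact .single (hqr ▸ hqw)
    · exact .tail (ih _ (hn ▸ numAncestors_lt_of_adj hA hS hqw) hq hqr rfl) hqw

lemma ArcOK.adj {e : Arc} (h : G.ArcOK e) : G.Adj e.1 e.2.1 := (Nat.zero_le _).trans_lt h

lemma isWalk_iff {p : List Arc} : G.IsWalk p s t ↔ p ≠ [] ∧ (∀ e ∈ p, G.ArcOK e) ∧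
    List.IsChain (fun e f : Arc => e.2.1 = f.1) p ∧
    p.head?.map Prod.fst = some s ∧ p.getLast?.map (fun e => e.2.1) = some t :=
  Iff.rfl

lemma isWalk_cons_iff {e : Arc} {p : List Arc} :
    G.IsWalk (e :: p) s t ↔ e.1 = s ∧ G.ArcOK e ∧ (p = [] ∧ e.2.1 = t ∨ G.IsWalk p e.2.1 t) := by
  cases p with
  | nil => simp [isWalk_iff]; tauto
  | cons f p =>
    simp only [isWalk_iff, List.isChain_cons_cons, List.head?_cons, Option.map_some,
      Option.some.injEq, List.getLast?_cons_cons, List.mem_cons, forall_eq_or_imp]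
    grind

lemma IsWalk.sreaches {p : List Arc} (h : G.IsWalk p s t) : G.SReaches s t := by
  induction p generalizing s with
  | nil => exact absurd rfl h.1
  | cons e p ih =>
    obtain ⟨rfl, he, ⟨-, rfl⟩ | hp⟩ := isWalk_cons_iff.mp h
    · exact .single he.adj
    · exact .head he.adj (ih hp)

lemma IsWalk.reaches_of_mem {p : List Arc} (h : G.IsWalk p s t) {e : Arc} (he : e ∈ p) :
    G.Reaches s e.1 := by
  induction p generalizing s with
  | nil => simp at he
  | cons f p ih =>
    obtain ⟨rfl, hf, hp⟩ := isWalk_cons_iff.mp h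
    rcases List.mem_cons.mp he with rfl | he
    · exact .refl
    · rcases hp with ⟨rfl, -⟩ | hp
      · simp at he
      · exact .head hf.adj (ih hp he)

lemma IsWalk.exists_head {p : List Arc} (h : G.IsWalk p s t) :
    ∃ e, p.head? = some e ∧ e.1 = s ∧ G.ArcOK e := by
  obtain ⟨e, p, rfl⟩ := List.exists_cons_of_ne_nil h.1
  exact ⟨e, rfl, (isWalk_cons_iff.mp h).1, (isWalk_cons_iff.mp h).2.1⟩

lemma IsWalk.mono {p : List Arc} (h : G.IsWalk p s t) (hp : ∀ e ∈ p, G.ArcOK e → H.ArcOK e) :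
    H.IsWalk p s t :=
  ⟨h.1, fun e he => hp e he (h.2.1 e he), h.2.2⟩

lemma exists_isWalk_of_transGen (h : Relation.TransGen G.Adj s t) : ∃ p, G.IsWalk p s t := by
  induction h using Relation.TransGen.head_induction_on with
  | single h => exact ⟨[(_, _, 0)], isWalk_cons_iff.mpr ⟨rfl, h, .inl ⟨rfl, rfl⟩⟩⟩
  | head h _ ih =>
    obtain ⟨p, hp⟩ := ih
    exact ⟨(_, _, 0) :: p, isWalk_cons_iff.mpr ⟨rfl, h, .inr hp⟩⟩

end Reachability

section Networks

variable {X : Finset ℕ} {G H : DG} {r w : ℕ}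

lemma IsNetwork.eq_root (hN : G.IsNetwork X) (hr : G.IsRoot r) (hw : G.IsRoot w) : w = r :=
  hN.root.unique hw hr

lemma IsNetwork.inDeg_pos (hN : G.IsNetwork X) (hr : G.IsRoot r) (hw : w ∈ G.verts)
    (hwr : w ≠ r) : 0 < G.inDeg w := by
  rcases hN.nodes w hw with h | ⟨-, h, -⟩ | ⟨-, h, -⟩ | ⟨-, h, -⟩
  · exact absurd (hN.eq_root hr h) hwr
  all_goals omega

lemma IsNetwork.exists_isWalk_of_root (hN : G.IsNetwork X) (hr : G.IsRoot r)
    (hw : w ∈ G.verts) (hwr : w ≠ r) : ∃ p, G.IsWalk p r w :=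
  exists_isWalk_of_transGen
    (transGen_of_inDeg_pos hN.acyclic hN.supported (fun _ => hN.inDeg_pos hr) hw hwr)

lemma IsNetwork.of_agree (hG : G.IsNetwork X) (hA : H.Acyclic) (hS : H.Supported)
    (hlabel : H.label = G.label)
    (hdeg : ∀ w ∈ H.verts, w ∈ G.verts → H.inDeg w = G.inDeg w ∧ H.outDeg w = G.outDeg w)
    (hnew : ∀ w ∈ H.verts, w ∉ G.verts → H.IsTreeNode w ∨ H.IsRetic w)
    (hold : ∀ w ∈ G.verts, w ∉ H.verts → G.IsTreeNode w ∨ G.IsRetic w) : H.IsNetwork X := by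
  have transfer : ∀ P : ℕ → ℕ → Prop, ¬ P 1 2 → ¬ P 2 1 → ∀ w,
      (w ∈ H.verts ∧ P (H.inDeg w) (H.outDeg w)) ↔ (w ∈ G.verts ∧ P (G.inDeg w) (G.outDeg w)) := by
    intro P h12 h21 w
    by_cases hH : w ∈ H.verts <;> by_cases hG' : w ∈ G.verts
    · rw [(hdeg w hH hG').1, (hdeg w hH hG').2]
      simp [hH, hG']
    · rcases hnew w hH hG' with ⟨-, h1, h2⟩ | ⟨-, h1, h2⟩ <;> simp_all
    · rcases hold w hG' hH with ⟨-, h1, h2⟩ | ⟨-, h1, h2⟩ <;> simp_all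
    · simp [hH, hG']
  have root_iff := transfer (fun i o => i = 0 ∧ o = 1) (by simp) (by simp)
  have leaf_iff := transfer (fun i o => i = 1 ∧ o = 0) (by simp) (by simp)
  obtain ⟨ρ, hρ, hρu⟩ := hG.root
  refine ⟨⟨ρ, (root_iff ρ).mpr hρ, fun w hw => hρu w ((root_iff w).mp hw)⟩, fun w hw => ?_, hA,
    hS, fun w => ?_, hlabel ▸ hG.labelsSub, hlabel ▸ hG.labelsOnto⟩
  · by_cases hG' : w ∈ G.verts
    · obtain ⟨hi, ho⟩ := hdeg w hw hG'
      simpa [IsRoot, IsTreeNode, IsRetic, IsLeafNode, hi, ho, hw, hG'] using hG.nodes w hG'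
    · exact .inr ((hnew w hw hG').imp_right .inl)
  · rw [hlabel, hG.labels w]
    exact (leaf_iff w).symm

lemma reticNum_eq_of_subset (hsub : H.verts ⊆ G.verts)
    (hdeg : ∀ w ∈ H.verts, H.inDeg w = G.inDeg w ∧ H.outDeg w = G.outDeg w) :
    G.reticNum =
      H.reticNum + ((G.verts \ H.verts).filter (fun w => G.inDeg w = 2 ∧ G.outDeg w = 1)).card := by
  unfold reticNum
  conv_lhs => rw [← Finset.union_sdiff_of_subset hsub]
  rw [Finset.filter_union, Finset.card_union_of_disjoint
    (Finset.disjoint_filter_filter Finset.disjoint_sdiff)]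
  congr 2
  exact Finset.filter_congr fun w hw => by rw [(hdeg w hw).1, (hdeg w hw).2]

lemma IsBeadedTree.inDeg_eq_one_of_mult_eq_one (hB : G.IsBeadedTree X) {p : ℕ}
    (hp : p ∈ G.verts) (hw : w ∈ G.verts) (hpw : G.mult p w = 1) : G.inDeg w = 1 := by
  have := mult_le_inDeg (w := w) hp
  rcases hB.1.nodes w hw with ⟨-, h1, -⟩ | ⟨-, h1, -⟩ | ⟨-, h1, -⟩ | ⟨-, h1, -⟩
  · omega
  · exact h1
  · obtain ⟨q, hq⟩ := hB.2 w hw h1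
    have hqp : q ≠ p := by rintro rfl; omega
    have := mult_add_mult_le_inDeg (w := w) hp (hB.1.supported q w (by unfold Adj; omega)).1 hqp
    omega
  · exact h1

end Networks

section MulTrees

variable {X : Finset ℕ} {T : DG} {r q w x y y' z : ℕ}

lemma IsMulTree.eq_root (hT : T.IsMulTree X) (hr : T.IsRoot r) (hw : T.IsRoot w) : w = r :=
  hT.root.unique hw hr

lemma IsMulTree.inDeg_eq_one (hT : T.IsMulTree X) (hr : T.IsRoot r) (hw : w ∈ T.verts)
    (hwr : w ≠ r) : T.inDeg w = 1 := by
  rcases hT.nodes w hw with h | h | h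
  · exact absurd (hT.eq_root hr h) hwr
  · exact h.2.1
  · exact h.2.1

lemma IsMulTree.eq_of_adj_of_adj (hT : T.IsMulTree X) (hq : T.Adj q w) (hz : T.Adj z w) :
    z = q := by
  refine eq_of_adj_of_inDeg_eq_one hT.supported ?_ hq hz
  rcases hT.nodes w (hT.supported q w hq).2 with h | h | h
  · have := mult_le_inDeg (w := w) (hT.supported q w hq).1
    simp only [Adj, h.2.1] at hq this
    omega
  · exact h.2.1
  · exact h.2.1

lemma IsMulTree.eq_or_reaches_of_adj (hT : T.IsMulTree X) (hqw : T.Adj q w)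
    (h : T.Reaches z w) : w = z ∨ T.Reaches z q := by
  rcases h.cases_tail with rfl | ⟨c, hc, hcw⟩
  · exact .inl rfl
  · exact .inr (hT.eq_of_adj_of_adj hcw hqw ▸ hc)

lemma IsMulTree.reaches_total (hT : T.IsMulTree X) {s s' : ℕ} (h : T.Reaches s w)
    (h' : T.Reaches s' w) : T.Reaches s s' ∨ T.Reaches s' s := by
  induction h with
  | refl => exact .inr h'
  | tail _ hcw ih =>
    rcases hT.eq_or_reaches_of_adj hcw h' with rfl | h'
    · exact .inl (.tail ‹_› hcw)
    · exact ih h'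

lemma IsMulTree.not_reaches_sibling (hT : T.IsMulTree X) (hy : T.Adj x y) (hy' : T.Adj x y')
    (hne : y ≠ y') : ¬ T.Reaches y y' := fun h => by
  rcases hT.eq_or_reaches_of_adj hy' h with h | h
  · exact hne h.symm
  · exact hT.acyclic x (.head' hy h)

lemma IsMulTree.not_reaches_of_siblings (hT : T.IsMulTree X) (hy : T.Adj x y)
    (hy' : T.Adj x y') (hne : y ≠ y') (h : T.Reaches y w) : ¬ T.Reaches y' w := fun h' => by
  rcases hT.reaches_total h h' with h | h
  · exact hT.not_reaches_sibling hy hy' hne h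
  · exact hT.not_reaches_sibling hy' hy hne.symm h

lemma IsMulTree.mult_eq_zero_of_adj (hT : T.IsMulTree X) {p : ℕ} (hp : T.Adj p w) (hq : q ≠ p) :
    T.mult q w = 0 :=
  Nat.eq_zero_of_not_pos fun h => hq (hT.eq_of_adj_of_adj hp h)

end MulTrees

section Embeddings

variable {T N : DG} {h : ℕ → ℕ} {hE : ℕ → ℕ → List Arc} {p s c c' w z : ℕ}

lemma WeakEmbedding.map_ne_of_mult_eq_zero (hemb : WeakEmbedding T N h hE) (hpw : T.Adj p w)
    (hz : ∀ q, N.mult q z = 0) : h w ≠ z := by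
  intro hwz
  obtain ⟨q, -, hq⟩ := Relation.TransGen.tail'_iff.mp (hemb.2.2.1 p w hpw).sreaches
  simp [Adj, hwz, hz] at hq

lemma WeakEmbedding.outDeg_ne_one (hemb : WeakEmbedding T N h hE) (hS : N.Supported)
    (hc : T.Adj s c) (hc' : T.Adj s c') (hne : c ≠ c') : N.outDeg (h s) ≠ 1 := by
  intro h1
  obtain ⟨e, he, he1, heok⟩ := (hemb.2.2.1 s c hc).exists_head
  obtain ⟨e', he', he1', heok'⟩ := (hemb.2.2.1 s c' hc').exists_head
  exact hemb.2.2.2 s c c' hc hc' hne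
    (by rw [he, he', arc_eq_of_outDeg_eq_one hS h1 heok heok' he1 he1'])

end Embeddings

/-- The two members of `F1(T)` are then `f1del T r x y y'` and `f1del T r x y' y`. -/
structure TopSplit (X : Finset ℕ) (T : DG) (r x y y' : ℕ) : Prop where
  mulTree : T.IsMulTree X
  root : T.IsRoot r
  adj_root : T.Adj r x
  adj_left : T.Adj x y
  adj_right : T.Adj x y'
  ne : y ≠ y'

section F1

variable {T : DG} {r x y y' s t w : ℕ}

lemma mem_f1del : w ∈ (f1del T r x y y').verts ↔ w ∈ T.verts ∧ ¬ T.Reaches y' w ∧ w ≠ x := by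
  simp only [f1del, Finset.mem_erase, Finset.mem_filter]
  tauto

lemma f1del_mult (hst : ¬ (s = r ∧ t = y)) (hs : s ≠ x) (ht : t ≠ x) (hs' : ¬ T.Reaches y' s)
    (ht' : ¬ T.Reaches y' t) : (f1del T r x y y').mult s t = T.mult s t := by
  simp [f1del, hst, hs, ht, hs', ht']

lemma adj_f1del : (f1del T r x y y').Adj s t ↔ (s = r ∧ t = y) ∨
    (T.Adj s t ∧ s ≠ x ∧ t ≠ x ∧ ¬ T.Reaches y' s ∧ ¬ T.Reaches y' t) := by
  by_cases hst : s = r ∧ t = y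
  · simp [Adj, f1del, hst]
  · by_cases h : s = x ∨ t = x ∨ T.Reaches y' s ∨ T.Reaches y' t
    · simp only [Adj, f1del, if_neg hst, if_pos h]
      tauto
    · push Not at h
      rw [Adj, f1del_mult hst h.1 h.2.1 h.2.2.1 h.2.2.2]
      tauto

lemma label_f1del (hw : w ≠ x) (hw' : ¬ T.Reaches y' w) :
    (f1del T r x y y').label w = T.label w := by
  simp [f1del, hw, hw']

lemma adj_of_adj_f1del (h : (f1del T r x y y').Adj s t) (hs : s ≠ r) :
    T.Adj s t := by
  rcases adj_f1del.mp h with ⟨rfl, -⟩ | ⟨h, -⟩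
  · exact absurd rfl hs
  · exact h

end F1

namespace TopSplit

variable {X : Finset ℕ} {T : DG} {r x y y' s t w : ℕ} (C : TopSplit X T r x y y')
include C

lemma swap : TopSplit X T r x y' y :=
  ⟨C.mulTree, C.root, C.adj_root, C.adj_right, C.adj_left, C.ne.symm⟩

lemma mult_to_root : T.mult s r = 0 :=
  mult_eq_zero_of_inDeg_eq_zero C.mulTree.supported C.root.2.1

lemma ne_root_of_adj (h : T.Adj s t) : t ≠ r := by
  rintro rfl
  simp [Adj, C.mult_to_root] at h

lemma eq_of_adj_root (h : T.Adj r t) : t = x := by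
  by_contra hne
  have hle : T.outDeg r ≤ T.mult r x := by rw [C.root.2.2]; exact C.adj_root
  have := mult_eq_zero_of_outDeg_le C.mulTree.supported (C.mulTree.supported r x C.adj_root).2
    hle hne
  simp [Adj, this] at h

lemma eq_of_adj_top (h : T.Adj x t) : t = y ∨ t = y' := by
  by_contra! hne
  have hS := C.mulTree.supported
  have hx : T.outDeg x = 2 := by
    rcases C.mulTree.nodes x (hS r x C.adj_root).2 with h' | h' | h'
    · exact absurd h'.2.1 (C.adj_root.trans_le (mult_le_inDeg C.root.1)).ne'
    · exact h'.2.2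
    · exact absurd h'.2.2 (h.trans_le (mult_le_outDeg (hS x t h).2)).ne'
  have hsub : ({y, y', t} : Finset ℕ) ⊆ T.verts := by
    simp [Finset.insert_subset_iff, (hS x y C.adj_left).2, (hS x y' C.adj_right).2, (hS x t h).2]
  have hsum := Finset.sum_le_sum_of_subset (f := fun c => T.mult x c) hsub
  rw [Finset.sum_insert (by simp [C.ne, hne.1.symm]), Finset.sum_pair hne.2.symm] at hsum
  have := C.adj_left; have := C.adj_right; unfold Adj at *
  change _ ≤ T.outDeg x at hsum
  omega

lemma top_ne_root : x ≠ r := C.ne_root_of_adj C.adj_root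

lemma left_ne_root : y ≠ r := C.ne_root_of_adj C.adj_left

lemma left_ne_top : y ≠ x := fun h => C.mulTree.acyclic x (.single (h ▸ C.adj_left))

lemma ne_root_of_isLeafNode (hw : T.IsLeafNode w) : w ≠ r := by
  rintro rfl
  have := C.root.2.1
  have := hw.2.1
  omega

lemma ne_top_of_isLeafNode (hw : T.IsLeafNode w) : w ≠ x := by
  rintro rfl
  have := C.adj_left.trans_le (mult_le_outDeg (C.mulTree.supported _ _ C.adj_left).2)
  rw [hw.2.2] at this
  exact lt_irrefl _ this

lemma not_reaches_root (hw : w ≠ r) : ¬ T.Reaches w r :=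
  fun h => hw (eq_of_reaches_of_mult_eq_zero (fun _ => C.mult_to_root) h)

lemma not_reaches_right_left : ¬ T.Reaches y' y :=
  C.swap.mulTree.not_reaches_sibling C.adj_right C.adj_left C.ne.symm

lemma not_reaches_left (h : T.Reaches y' w) : ¬ T.Reaches y w :=
  C.mulTree.not_reaches_of_siblings C.adj_right C.adj_left C.ne.symm h

lemma root_mem_f1del : r ∈ (f1del T r x y y').verts :=
  mem_f1del.mpr ⟨C.root.1, C.not_reaches_root C.swap.left_ne_root, C.top_ne_root.symm⟩

lemma left_mem_f1del : y ∈ (f1del T r x y y').verts :=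
  mem_f1del.mpr ⟨(C.mulTree.supported x y C.adj_left).2, C.not_reaches_right_left, C.left_ne_top⟩

lemma outDeg_f1del (hw : w ∈ (f1del T r x y y').verts) (hwr : w ≠ r) :
    (f1del T r x y y').outDeg w = T.outDeg w := by
  obtain ⟨-, hw', hwx⟩ := mem_f1del.mp hw
  refine outDeg_eq_of_subset (fun t ht => (mem_f1del.mp ht).1) (fun t ht => ?_) fun t _ ht => ?_
  · obtain ⟨-, ht', htx⟩ := mem_f1del.mp ht
    exact f1del_mult (by tauto) hwx htx hw' ht'
  · refine Nat.eq_zero_of_not_pos fun hwt => ?_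
    rcases not_and_or.mp (mt mem_f1del.mpr ht) with h | h
    · exact h (C.mulTree.supported w t hwt).2
    rcases not_and_or.mp h with h | h
    · rcases C.mulTree.eq_or_reaches_of_adj hwt (not_not.mp h) with rfl | h
      · exact hwx (C.mulTree.eq_of_adj_of_adj hwt C.adj_right).symm
      · exact hw' h
    · exact hwr (C.mulTree.eq_of_adj_of_adj (not_not.mp h ▸ C.adj_root) hwt)

lemma inDeg_f1del (hw : w ∈ (f1del T r x y y').verts) (hwr : w ≠ r) :
    (f1del T r x y y').inDeg w = T.inDeg w := by
  obtain ⟨-, hw', hwx⟩ := mem_f1del.mp hw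
  by_cases hwy : w = y
  · subst hwy
    rw [C.mulTree.inDeg_eq_one C.root (C.mulTree.supported x w C.adj_left).2 hwr,
      inDeg_eq_mult C.root_mem_f1del fun q hq => ?_]
    · simp [f1del]
    by_cases h : q = x ∨ T.Reaches y' q
    · simp only [f1del]
      rw [if_neg (by tauto), if_pos (by tauto)]
    · push Not at h
      rw [f1del_mult (by tauto) h.1 hwx h.2 hw']
      exact C.mulTree.mult_eq_zero_of_adj C.adj_left h.1
  refine inDeg_eq_of_subset (fun q hq => (mem_f1del.mp hq).1) (fun q hq => ?_) fun q _ hq => ?_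
  · obtain ⟨-, hq', hqx⟩ := mem_f1del.mp hq
    exact f1del_mult (by tauto) hqx hwx hq' hw'
  · refine Nat.eq_zero_of_not_pos fun hqw => ?_
    rcases not_and_or.mp (mt mem_f1del.mpr hq) with h | h
    · exact h (C.mulTree.supported q w hqw).1
    rcases not_and_or.mp h with h | h
    · exact hw' ((not_not.mp h).tail hqw)
    · rcases C.eq_of_adj_top (not_not.mp h ▸ hqw) with rfl | rfl
      · exact hwy rfl
      · exact hw' .refl

lemma isLeafNode_f1del_iff :
    (f1del T r x y y').IsLeafNode w ↔ w ∈ (f1del T r x y y').verts ∧ T.IsLeafNode w := by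
  by_cases hwr : w = r
  · rw [hwr]
    have h1 := mult_le_outDeg (G := f1del T r x y y') (w := r) C.left_mem_f1del
    have h2 : (f1del T r x y y').mult r y = 1 := by simp [f1del]
    have h3 := C.root.2.2
    exact ⟨fun ⟨_, _, h⟩ => by omega, fun ⟨_, _, _, h⟩ => by omega⟩
  · constructor
    · rintro ⟨hw, hi, ho⟩
      exact ⟨hw, (mem_f1del.mp hw).1, C.inDeg_f1del hw hwr ▸ hi, C.outDeg_f1del hw hwr ▸ ho⟩
    · rintro ⟨hw, -, hi, ho⟩
      exact ⟨hw, C.inDeg_f1del hw hwr ▸ hi, C.outDeg_f1del hw hwr ▸ ho⟩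

lemma eq_of_adj_f1del_root (h : (f1del T r x y y').Adj r t) : t = y := by
  rcases adj_f1del.mp h with ⟨-, rfl⟩ | ⟨h, -, htx, -⟩
  · rfl
  · exact absurd (C.eq_of_adj_root h) htx

lemma ne_top_of_adj (hst : T.Adj s t) (hsr : s ≠ r) : t ≠ x :=
  fun h => hsr (C.mulTree.eq_of_adj_of_adj C.adj_root (h ▸ hst))

lemma reaches_right_iff (hst : T.Adj s t) (hsx : s ≠ x) : T.Reaches y' t ↔ T.Reaches y' s := by
  refine ⟨fun ht => ?_, fun hs => hs.tail hst⟩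
  rcases C.mulTree.eq_or_reaches_of_adj hst ht with rfl | hs
  · exact absurd (C.mulTree.eq_of_adj_of_adj C.adj_right hst) hsx
  · exact hs

lemma adj_f1del_of_adj (hst : T.Adj s t) (hsr : s ≠ r) (hsx : s ≠ x) (hs : ¬ T.Reaches y' s) :
    (f1del T r x y y').Adj s t :=
  adj_f1del.mpr <|
    .inr ⟨hst, hsx, C.ne_top_of_adj hst hsr, hs, mt (C.reaches_right_iff hst hsx).mp hs⟩

lemma head_ne_glue {N : DG} {t' : ℕ} {h h' : ℕ → ℕ} {hE hE' : ℕ → ℕ → List Arc}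
    (hemb : WeakEmbedding (f1del T r x y y') N h hE)
    (hemb' : WeakEmbedding (f1del T r x y' y) N h' hE') (ht : T.Adj s t) (ht' : T.Adj s t')
    (hne : t ≠ t') (hsr : s ≠ r) (hsx : s ≠ x) :
    (if T.Reaches y' s then hE' s t else hE s t).head? ≠
      (if T.Reaches y' s then hE' s t' else hE s t').head? := by
  split_ifs with hs
  · have hs' := C.not_reaches_left hs
    exact hemb'.2.2.2 s t t' (C.swap.adj_f1del_of_adj ht hsr hsx hs')
      (C.swap.adj_f1del_of_adj ht' hsr hsx hs') hne
  · exact hemb.2.2.2 s t t' (C.adj_f1del_of_adj ht hsr hsx hs)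
      (C.adj_f1del_of_adj ht' hsr hsx hs) hne

end TopSplit

lemma IsMulTree.exists_topSplit {X : Finset ℕ} {T : DG} (hT : T.IsMulTree X)
    (h : 1 < T.numLeaves) : ∃ r x y y', TopSplit X T r x y y' := by
  have hS := hT.supported
  obtain ⟨r, hr, -⟩ := hT.root
  obtain ⟨x, hrx, hr0⟩ := exists_child_of_outDeg_eq_one hS hr.2.2
  have hrx : T.Adj r x := by unfold Adj; omega
  have hxr : x ≠ r := fun h => hT.acyclic r (.single (h ▸ hrx))
  rcases hT.nodes x (hS r x hrx).2 with hx | hx | hx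
  · exact absurd (hT.eq_root hr hx) hxr
  · obtain ⟨y, y', hne, hy, hy'⟩ := exists_two_children hT.simple hx.2.2
    exact ⟨r, x, y, y', hT, hr, hrx, hy, hy', hne⟩
  · have leaf_eq : ∀ w ∈ T.verts, (T.label w).isSome → w = x := by
      intro w hw hl
      have hwr : w ≠ r := by
        rintro rfl
        have := ((hT.labels w).mp (Option.isSome_iff_exists.mp hl)).2.1
        have := hr.2.1
        omega
      obtain ⟨b, hb, hbw⟩ := Relation.TransGen.head'_iff.mp <| transGen_of_inDeg_pos hT.acyclic hS
        (fun w hw hwr => by rw [hT.inDeg_eq_one hr hw hwr]; exact one_pos) hw hwr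
      obtain rfl : b = x := by_contra fun hbx => by simp [Adj, hr0 b hbx] at hb
      rcases hbw.cases_head with rfl | ⟨c, hc, -⟩
      · rfl
      · have := mult_le_outDeg (w := b) (hS b c hc).2
        simp only [Adj, hx.2.2] at hc this
        omega
    obtain ⟨w1, hw1, w2, hw2, hne⟩ := Finset.one_lt_card.mp h
    simp only [Finset.mem_filter] at hw1 hw2
    exact absurd ((leaf_eq w1 hw1.1 hw1.2).trans (leaf_eq w2 hw2.1 hw2.2).symm) hne

structure BeadData (B : DG) (r u v a : ℕ) : Prop where
  root : B.IsRoot r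
  supported : B.Supported
  mult_ru : B.mult r u = 1
  mult_uv : B.mult u v = 2
  mult_va : B.mult v a = 1
  r_out : ∀ t, t ≠ u → B.mult r t = 0
  u_out : ∀ t, t ≠ v → B.mult u t = 0
  v_out : ∀ t, t ≠ a → B.mult v t = 0
  u_in : ∀ q, q ≠ r → B.mult q u = 0
  v_in : ∀ q, q ≠ u → B.mult q v = 0
  a_in : ∀ q, q ≠ v → B.mult q a = 0

lemma IsBeadedTree.exists_beadData {X : Finset ℕ} {B : DG} (hB : B.IsBeadedTree X)
    (h : B.HasBeadAtRoot) : ∃ r u v a, BeadData B r u v a := by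
  obtain ⟨r, u, v, hr, hru, huv⟩ := h
  have hN := hB.1
  have hS := hN.supported
  have hu := (hS r u hru).2
  have hv := (hS u v (by unfold Adj; omega)).2
  have hu_deg : B.inDeg u = 1 ∧ B.outDeg u = 2 := by
    have := mult_le_inDeg (w := u) hr.1
    have := mult_le_outDeg (w := u) hv
    unfold Adj at hru
    rcases hN.nodes u hu with ⟨-, h1, h2⟩ | ⟨-, h1, h2⟩ | ⟨-, h1, h2⟩ | ⟨-, h1, h2⟩ <;> omega
  have hv_deg : B.inDeg v = 2 ∧ B.outDeg v = 1 := by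
    have := mult_le_inDeg (w := v) hu
    rcases hN.nodes v hv with ⟨-, h1, h2⟩ | ⟨-, h1, h2⟩ | ⟨-, h1, h2⟩ | ⟨-, h1, h2⟩ <;> omega
  obtain ⟨a, hva, v_out⟩ := exists_child_of_outDeg_eq_one hS hv_deg.2
  have ha := (hS v a (by unfold Adj; omega)).2
  have ha_deg := hB.inDeg_eq_one_of_mult_eq_one hv ha hva
  have hmru : B.mult r u = 1 := le_antisymm (hu_deg.1 ▸ mult_le_inDeg hr.1) hru
  exact ⟨r, u, v, a, hr, hS, hmru, huv, hva,
    fun _ => mult_eq_zero_of_outDeg_le hS hu (by rw [hr.2.2, hmru]),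
    fun _ => mult_eq_zero_of_outDeg_le hS hv (by rw [hu_deg.2, huv]), v_out,
    fun _ => mult_eq_zero_of_inDeg_le hS hr.1 (by rw [hu_deg.1, hmru]),
    fun _ => mult_eq_zero_of_inDeg_le hS hu (by rw [hv_deg.1, huv]),
    fun _ => mult_eq_zero_of_inDeg_le hS hv (by rw [ha_deg, hva])⟩

noncomputable def delBead (B : DG) (r u v a : ℕ) : DG where
  verts := (B.verts.erase u).erase v
  mult := fun s t =>
    if s = r ∧ t = a then 1
    else if s = u ∨ s = v ∨ t = u ∨ t = v then 0
    else B.mult s t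
  label := B.label

section DelBead

variable {B : DG} {r u v a s t w : ℕ}

lemma mem_delBead : w ∈ (delBead B r u v a).verts ↔ w ∈ B.verts ∧ w ≠ u ∧ w ≠ v := by
  simp only [delBead, Finset.mem_erase]
  tauto

lemma delBead_mult (hs : s ≠ u ∧ s ≠ v) (ht : t ≠ u ∧ t ≠ v) (hst : ¬ (s = r ∧ t = a)) :
    (delBead B r u v a).mult s t = B.mult s t := by
  simp [delBead, hs, ht, hst]

lemma adj_delBead : (delBead B r u v a).Adj s t ↔
    (s = r ∧ t = a) ∨ (B.Adj s t ∧ (s ≠ u ∧ s ≠ v) ∧ (t ≠ u ∧ t ≠ v)) := by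
  by_cases hst : s = r ∧ t = a
  · simp [Adj, delBead, hst]
  · by_cases h : s = u ∨ s = v ∨ t = u ∨ t = v
    · simp only [Adj, delBead, if_neg hst, if_pos h]
      tauto
    · push Not at h
      rw [Adj, delBead_mult ⟨h.1, h.2.1⟩ h.2.2 hst]
      tauto

end DelBead

namespace BeadData

variable {X Y : Finset ℕ} {B T : DG} {r u v a rT x y y' q s t w z : ℕ} {p : List Arc}
  {h : ℕ → ℕ} {hE : ℕ → ℕ → List Arc} (D : BeadData B r u v a)
include D

lemma r_in : B.mult q r = 0 := mult_eq_zero_of_inDeg_eq_zero D.supported D.root.2.1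

lemma u_mem : u ∈ B.verts := (D.supported r u (by simp [Adj, D.mult_ru])).2
lemma v_mem : v ∈ B.verts := (D.supported u v (by simp [Adj, D.mult_uv])).2
lemma a_mem : a ∈ B.verts := (D.supported v a (by simp [Adj, D.mult_va])).2

lemma r_ne_u : r ≠ u := by rintro rfl; have h := D.mult_ru; rw [D.r_in] at h; cases h
lemma r_ne_v : r ≠ v := by rintro rfl; have h := D.mult_uv; rw [D.r_in] at h; cases h
lemma r_ne_a : r ≠ a := by rintro rfl; have h := D.mult_va; rw [D.r_in] at h; cases h
lemma u_ne_v : u ≠ v := by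
  rintro rfl; have h := D.mult_uv; rw [D.u_in u D.r_ne_u.symm] at h; cases h
lemma u_ne_a : u ≠ a := by
  rintro rfl; have h := D.mult_va; rw [D.u_in v D.r_ne_v.symm] at h; cases h
lemma v_ne_a : v ≠ a := by
  rintro rfl; have h := D.mult_va; rw [D.v_in v D.u_ne_v.symm] at h; cases h

lemma root_mem_delBead : r ∈ (delBead B r u v a).verts :=
  mem_delBead.mpr ⟨D.root.1, D.r_ne_u, D.r_ne_v⟩

lemma a_mem_delBead : a ∈ (delBead B r u v a).verts :=
  mem_delBead.mpr ⟨D.a_mem, D.u_ne_a.symm, D.v_ne_a.symm⟩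

lemma inDeg_u : B.inDeg u = 1 := (inDeg_eq_mult D.root.1 D.u_in).trans D.mult_ru
lemma outDeg_u : B.outDeg u = 2 := (outDeg_eq_mult D.v_mem D.u_out).trans D.mult_uv
lemma inDeg_v : B.inDeg v = 2 := (inDeg_eq_mult D.u_mem D.v_in).trans D.mult_uv
lemma outDeg_v : B.outDeg v = 1 := (outDeg_eq_mult D.a_mem D.v_out).trans D.mult_va
lemma inDeg_a : B.inDeg a = 1 := (inDeg_eq_mult D.v_mem D.a_in).trans D.mult_va

lemma inDeg_delBead (hw : w ∈ (delBead B r u v a).verts) :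
    (delBead B r u v a).inDeg w = B.inDeg w := by
  obtain ⟨-, hwu, hwv⟩ := mem_delBead.mp hw
  by_cases hwa : w = a
  · subst hwa
    rw [D.inDeg_a, inDeg_eq_mult D.root_mem_delBead fun q hq => ?_]
    · simp [delBead]
    by_cases h : q = u ∨ q = v
    · simp [delBead, hq, h, hwu, hwv]
    · push Not at h
      rw [delBead_mult h ⟨hwu, hwv⟩ (by tauto)]
      exact D.a_in q h.2
  refine inDeg_eq_of_subset (fun q hq => (mem_delBead.mp hq).1) (fun q hq => ?_) fun q _ hq => ?_
  · obtain ⟨-, hq⟩ := mem_delBead.mp hq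
    exact delBead_mult hq ⟨hwu, hwv⟩ (by tauto)
  · rcases not_and_or.mp (mt mem_delBead.mpr hq) with h | h
    · exact mult_eq_zero_of_left_notMem D.supported h
    rcases (by tauto : q = u ∨ q = v) with rfl | rfl <;> simp_all [D.u_out, D.v_out]

lemma outDeg_delBead (hw : w ∈ (delBead B r u v a).verts) :
    (delBead B r u v a).outDeg w = B.outDeg w := by
  obtain ⟨-, hwu, hwv⟩ := mem_delBead.mp hw
  by_cases hwr : w = r
  · subst hwr
    rw [D.root.2.2, outDeg_eq_mult D.a_mem_delBead fun q hq => ?_]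
    · simp [delBead]
    by_cases h : q = u ∨ q = v
    · simp [delBead, hq, h, hwu, hwv]
    · push Not at h
      rw [delBead_mult ⟨hwu, hwv⟩ h (by tauto)]
      exact D.r_out q h.1
  refine outDeg_eq_of_subset (fun q hq => (mem_delBead.mp hq).1) (fun q hq => ?_) fun q _ hq => ?_
  · obtain ⟨-, hq⟩ := mem_delBead.mp hq
    exact delBead_mult ⟨hwu, hwv⟩ hq (by tauto)
  · rcases not_and_or.mp (mt mem_delBead.mpr hq) with h | h
    · exact mult_eq_zero_of_right_notMem D.supported h
    rcases (by tauto : q = u ∨ q = v) with rfl | rfl <;> simp_all [D.u_in, D.v_in]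

lemma isRoot_delBead : (delBead B r u v a).IsRoot r := by
  have hr := D.root_mem_delBead
  exact ⟨hr, (D.inDeg_delBead hr).trans D.root.2.1, (D.outDeg_delBead hr).trans D.root.2.2⟩

lemma isNetwork_delBead (hN : B.IsNetwork X) : (delBead B r u v a).IsNetwork X := by
  have hr : B.Adj r u := by simp [Adj, D.mult_ru]
  have hu : B.Adj u v := by simp [Adj, D.mult_uv]
  have hv : B.Adj v a := by simp [Adj, D.mult_va]
  refine hN.of_agree (acyclic_of_forall_adj_sreaches hN.acyclic fun s t hst => ?_)
    (fun s t hst => ?_) rfl (fun w hw _ => ⟨D.inDeg_delBead hw, D.outDeg_delBead hw⟩) (fun w hw hw' => ?_)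
    (fun w hw hw' => ?_)
  · rcases adj_delBead.mp hst with ⟨rfl, rfl⟩ | ⟨hst, -⟩
    · exact .head hr (.head hu (.single hv))
    · exact .single hst
  · rcases adj_delBead.mp hst with ⟨rfl, rfl⟩ | ⟨hst, hs, ht⟩
    · exact ⟨D.root_mem_delBead, D.a_mem_delBead⟩
    · exact ⟨mem_delBead.mpr ⟨(hN.supported s t hst).1, hs⟩,
        mem_delBead.mpr ⟨(hN.supported s t hst).2, ht⟩⟩
  · exact absurd (mem_delBead.mp hw).1 hw'
  · rcases not_and_or.mp (mt mem_delBead.mpr hw') with h | h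
    · exact absurd hw h
    rcases (by tauto : w = u ∨ w = v) with rfl | rfl
    · exact .inl ⟨hw, D.inDeg_u, D.outDeg_u⟩
    · exact .inr ⟨hw, D.inDeg_v, D.outDeg_v⟩

lemma isBeadedTree_delBead (hB : B.IsBeadedTree X) :
    (delBead B r u v a).IsBeadedTree X := by
  refine ⟨D.isNetwork_delBead hB.1, fun w hw hw2 => ?_⟩
  obtain ⟨hwB, hwu, hwv⟩ := mem_delBead.mp hw
  obtain ⟨p, hp⟩ := hB.2 w hwB (D.inDeg_delBead hw ▸ hw2)
  have hwa : w ≠ a := by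
    rintro rfl
    rw [D.inDeg_delBead hw, D.inDeg_a] at hw2
    cases hw2
  have hpu : p ≠ u := fun h => by simp [h, D.u_out w hwv] at hp
  have hpv : p ≠ v := fun h => by simp [h, D.v_out w hwa] at hp
  exact ⟨p, (delBead_mult ⟨hpu, hpv⟩ ⟨hwu, hwv⟩ (by tauto)).trans hp⟩

lemma reticNum_delBead : (delBead B r u v a).reticNum + 1 = B.reticNum := by
  have hdiff : B.verts \ (delBead B r u v a).verts = {u, v} := by
    ext w
    simp only [Finset.mem_sdiff, mem_delBead, Finset.mem_insert, Finset.mem_singleton]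
    constructor
    · tauto
    · rintro (rfl | rfl)
      · exact ⟨D.u_mem, by simp⟩
      · exact ⟨D.v_mem, by simp⟩
  rw [reticNum_eq_of_subset (fun w hw => (mem_delBead.mp hw).1)
    fun w hw => ⟨D.inDeg_delBead hw, D.outDeg_delBead hw⟩, hdiff,
    Finset.filter_insert, Finset.filter_singleton]
  simp [D.inDeg_u, D.inDeg_v, D.outDeg_v]

lemma mem_top_of_reaches (hz : B.Reaches s z) (hz' : z = r ∨ z = u ∨ z = v) :
    s = r ∨ s = u ∨ s = v := by
  induction hz using Relation.ReflTransGen.head_induction_on with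
  | refl => exact hz'
  | head hsc _ ih =>
    rcases ih with rfl | rfl | rfl
    · simp [Adj, D.r_in] at hsc
    · exact .inl (by_contra fun hs => by simp [Adj, D.u_in _ hs] at hsc)
    · exact .inr (.inl (by_contra fun hs => by simp [Adj, D.v_in _ hs] at hsc))

lemma isWalk_delBead (hw : B.IsWalk p s t) (hs : ¬ (s = r ∨ s = u ∨ s = v)) :
    (delBead B r u v a).IsWalk p s t := by
  refine hw.mono fun e he hok => ?_
  have h1 : ¬ (e.1 = r ∨ e.1 = u ∨ e.1 = v) :=
    fun h => hs (D.mem_top_of_reaches (hw.reaches_of_mem he) h)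
  have h2 : e.2.1 ≠ u ∧ e.2.1 ≠ v := by
    have hadj := hok.adj
    constructor <;> intro h2 <;> rw [h2] at hadj
    · exact h1 (.inl (by_contra fun h => by simp [Adj, D.u_in _ h] at hadj))
    · exact h1 (.inr (.inl (by_contra fun h => by simp [Adj, D.v_in _ h] at hadj)))
  change e.2.2 < (delBead B r u v a).mult e.1 e.2.1
  rw [delBead_mult (by tauto) h2 (fun h => h1 (.inl h.1))]
  exact hok

lemma map_not_mem_top (C : TopSplit Y T rT x y y') (hemb : WeakEmbedding T B h hE)
    (hw : w ∈ T.verts) (hwr : w ≠ rT) (hwx : w ≠ x) : ¬ (h w = r ∨ h w = u ∨ h w = v) := by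
  have hT := C.mulTree
  have parent : ∀ w ∈ T.verts, w ≠ rT → ∃ q, T.Adj q w := fun w hw hwr => by
    obtain ⟨q, -, hq⟩ :=
      exists_adj_of_inDeg_pos (by rw [hT.inDeg_eq_one C.root hw hwr]; exact one_pos)
    exact ⟨q, hq⟩
  obtain ⟨q, hqw⟩ := parent w hw hwr
  rintro (hr | hu | hv)
  · exact hemb.map_ne_of_mult_eq_zero hqw (fun _ => D.r_in) hr
  · have hqr : q ≠ rT := fun h => hwx (C.eq_of_adj_root (h ▸ hqw))
    obtain ⟨q', hq'⟩ := parent q (hT.supported q w hqw).1 hqr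
    obtain ⟨b, hb, hbu⟩ := Relation.TransGen.tail'_iff.mp (hemb.2.2.1 q w hqw).sreaches
    obtain rfl : b = r := by_contra fun h => by simp [Adj, hu, D.u_in _ h] at hbu
    exact hemb.map_ne_of_mult_eq_zero hq' (fun _ => D.r_in)
      (eq_of_reaches_of_mult_eq_zero (fun _ => D.r_in) hb)
  · rcases hT.nodes w hw with hw' | hw' | hw'
    · exact hwr (hT.eq_root C.root hw')
    · obtain ⟨c, c', hne, hc, hc'⟩ := exists_two_children hT.simple hw'.2.2
      exact hemb.outDeg_ne_one D.supported hc hc' hne (hv ▸ D.outDeg_v)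
    · have := (hemb.2.1 w hw').1.2.2
      rw [hv, D.outDeg_v] at this
      cases this

/-- The new root edge `rT → y` is mapped to a root path of the smaller network; all other edges
keep their paths. -/
lemma displays_f1del (hN : B.IsNetwork X) (C : TopSplit Y T rT x y y') (hd : B.Displays T) :
    (delBead B r u v a).Displays (f1del T rT x y y') := by
  obtain ⟨h, hE, hemb⟩ := hd
  have top : ∀ w ∈ T.verts, w ≠ rT → w ≠ x → ¬ (h w = r ∨ h w = u ∨ h w = v) :=
    fun _ hw hwr hwx => D.map_not_mem_top C hemb hw hwr hwx
  have hy := (C.mulTree.supported x y C.adj_left).2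
  have hy_top := top y hy C.left_ne_root C.left_ne_top
  obtain ⟨W, hW⟩ := (D.isNetwork_delBead hN).exists_isWalk_of_root D.isRoot_delBead
    (mem_delBead.mpr ⟨hemb.1 y hy, by tauto, by tauto⟩) (by tauto)
  refine ⟨fun w => if w = rT then r else h w, fun s t => if s = rT then W else hE s t,
    fun w hw => ?_, fun w hw => ?_, fun s t hst => ?_, fun s t t' ht ht' hne => ?_⟩
  · dsimp only
    split_ifs with hwr
    · exact D.root_mem_delBead
    · obtain ⟨hwT, -, hwx⟩ := mem_f1del.mp hw
      have := top w hwT hwr hwx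
      exact mem_delBead.mpr ⟨hemb.1 w hwT, by tauto, by tauto⟩
  · obtain ⟨hw', hwT⟩ := C.isLeafNode_f1del_iff.mp hw
    obtain ⟨-, hwy', hwx⟩ := mem_f1del.mp hw'
    have hwr := C.ne_root_of_isLeafNode hwT
    obtain ⟨hl, hlab⟩ := hemb.2.1 w hwT
    have := top w hwT.1 hwr hwx
    have hm : h w ∈ (delBead B r u v a).verts := mem_delBead.mpr ⟨hl.1, by tauto, by tauto⟩
    simp only [if_neg hwr]
    exact ⟨⟨hm, (D.inDeg_delBead hm).trans hl.2.1, (D.outDeg_delBead hm).trans hl.2.2⟩,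
      hlab.trans (label_f1del hwx hwy').symm⟩
  · rcases adj_f1del.mp hst with ⟨rfl, rfl⟩ | ⟨hst, hsx, htx, -⟩
    · simpa [C.left_ne_root] using hW
    · have hsr : s ≠ rT := fun h => htx (C.eq_of_adj_root (h ▸ hst))
      simp only [if_neg hsr, if_neg (C.ne_root_of_adj hst)]
      exact D.isWalk_delBead (hemb.2.2.1 s t hst) (top s (C.mulTree.supported s t hst).1 hsr hsx)
  · by_cases hsr : s = rT
    · subst hsr
      exact absurd ((C.eq_of_adj_f1del_root ht).trans (C.eq_of_adj_f1del_root ht').symm) hne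
    · simp only [if_neg hsr]
      exact hemb.2.2.2 s t t' (adj_of_adj_f1del ht hsr) (adj_of_adj_f1del ht' hsr) hne

end BeadData

structure AddBeadData (B : DG) (r a u v : ℕ) : Prop where
  root : B.IsRoot r
  supported : B.Supported
  mult_ra : B.mult r a = 1
  r_out : ∀ t, t ≠ a → B.mult r t = 0
  a_in : ∀ q, q ≠ r → B.mult q a = 0
  u_not_mem : u ∉ B.verts
  v_not_mem : v ∉ B.verts
  u_ne_v : u ≠ v

lemma IsBeadedTree.exists_addBeadData {X : Finset ℕ} {B : DG} (hB : B.IsBeadedTree X) :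
    ∃ r a u v, AddBeadData B r a u v := by
  have hS := hB.1.supported
  obtain ⟨r, hr, -⟩ := hB.1.root
  obtain ⟨a, hra, r_out⟩ := exists_child_of_outDeg_eq_one hS hr.2.2
  have ha := (hS r a (by unfold Adj; omega)).2
  have fresh : ∀ n, B.verts.sup id < n → n ∉ B.verts := fun n hn hmem =>
    absurd (Finset.le_sup (f := id) hmem) (not_le.mpr hn)
  refine ⟨r, a, B.verts.sup id + 1, B.verts.sup id + 2, hr, hS, hra, r_out,
    fun _ => mult_eq_zero_of_inDeg_le hS hr.1 ?_, fresh _ (by omega), fresh _ (by omega), by omega⟩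
  rw [hB.inDeg_eq_one_of_mult_eq_one hr.1 ha hra, hra]

noncomputable def addBead (B : DG) (r a u v : ℕ) : DG where
  verts := insert u (insert v B.verts)
  mult := fun s t =>
    if s = r ∧ t = a then 0
    else if s = r ∧ t = u then 1
    else if s = u ∧ t = v then 2
    else if s = v ∧ t = a then 1
    else if s = u ∨ s = v ∨ t = u ∨ t = v then 0
    else B.mult s t
  label := B.label

lemma mem_addBead {B : DG} {r a u v w : ℕ} :
    w ∈ (addBead B r a u v).verts ↔ w = u ∨ w = v ∨ w ∈ B.verts := by
  simp [addBead]

lemma addBead_mult {B : DG} {r a u v s t : ℕ} (hs : s ≠ u ∧ s ≠ v) (ht : t ≠ u ∧ t ≠ v)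
    (hst : ¬ (s = r ∧ t = a)) : (addBead B r a u v).mult s t = B.mult s t := by
  simp [addBead, hs, ht, hst]

lemma mem_addBead_top {B : DG} {r a u v : ℕ} : u ∈ (addBead B r a u v).verts :=
  mem_addBead.mpr (.inl rfl)

lemma mem_addBead_bottom {B : DG} {r a u v : ℕ} : v ∈ (addBead B r a u v).verts :=
  mem_addBead.mpr (.inr (.inl rfl))

lemma mem_addBead_of_mem {B : DG} {r a u v w : ℕ} (hw : w ∈ B.verts) :
    w ∈ (addBead B r a u v).verts :=
  mem_addBead.mpr (.inr (.inr hw))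

namespace AddBeadData

variable {X Y : Finset ℕ} {B T : DG} {r a u v rT x y y' q s t w z : ℕ} {p : List Arc}
  {h : ℕ → ℕ} {hE : ℕ → ℕ → List Arc} (E : AddBeadData B r a u v)
include E

lemma r_in : B.mult q r = 0 := mult_eq_zero_of_inDeg_eq_zero E.supported E.root.2.1

lemma a_mem : a ∈ B.verts := (E.supported r a (by simp [Adj, E.mult_ra])).2

lemma r_ne_a : r ≠ a := by
  rintro rfl
  have h := E.mult_ra
  rw [E.r_in] at h
  cases h

lemma ne_u_of_mem (hw : w ∈ B.verts) : w ≠ u := fun h => E.u_not_mem (h ▸ hw)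
lemma ne_v_of_mem (hw : w ∈ B.verts) : w ≠ v := fun h => E.v_not_mem (h ▸ hw)

lemma mult_ru : (addBead B r a u v).mult r u = 1 := by
  simp [addBead, (E.ne_u_of_mem E.a_mem).symm]

lemma mult_uv : (addBead B r a u v).mult u v = 2 := by
  simp [addBead, (E.ne_u_of_mem E.root.1).symm]

lemma mult_va : (addBead B r a u v).mult v a = 1 := by
  simp [addBead, (E.ne_v_of_mem E.root.1).symm, E.u_ne_v.symm]

lemma mult_from_u (ht : t ≠ v) : (addBead B r a u v).mult u t = 0 := by
  simp [addBead, (E.ne_u_of_mem E.root.1).symm, E.u_ne_v, ht]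

lemma mult_from_v (ht : t ≠ a) : (addBead B r a u v).mult v t = 0 := by
  simp [addBead, (E.ne_v_of_mem E.root.1).symm, E.u_ne_v.symm, ht]

lemma mult_to_u (hq : q ≠ r) : (addBead B r a u v).mult q u = 0 := by
  simp [addBead, hq, (E.ne_u_of_mem E.a_mem).symm, E.u_ne_v]

lemma mult_to_v (hq : q ≠ u) : (addBead B r a u v).mult q v = 0 := by
  simp [addBead, hq, (E.ne_v_of_mem E.a_mem).symm, E.u_ne_v.symm]

lemma adj_addBead : (addBead B r a u v).Adj s t ↔ (s = r ∧ t = u) ∨ (s = u ∧ t = v) ∨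
    (s = v ∧ t = a) ∨ (B.Adj s t ∧ (s ≠ u ∧ s ≠ v) ∧ (t ≠ u ∧ t ≠ v) ∧ ¬ (s = r ∧ t = a)) := by
  have := E.ne_u_of_mem E.root.1; have := E.ne_v_of_mem E.root.1
  have := E.ne_u_of_mem E.a_mem; have := E.ne_v_of_mem E.a_mem; have := E.u_ne_v
  by_cases hs : s = u ∨ s = v
  · rcases hs with rfl | rfl
    · by_cases ht : t = v
      · simp [Adj, ht, E.mult_uv]
      · simp_all [Adj, E.mult_from_u ht, eq_comm]
    · by_cases ht : t = a
      · simp [Adj, ht, E.mult_va]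
      · simp_all [Adj, E.mult_from_v ht, eq_comm]
  by_cases ht : t = u ∨ t = v
  · rcases ht with rfl | rfl
    · by_cases hs' : s = r
      · simp [Adj, hs', E.mult_ru]
      · simp_all [Adj, E.mult_to_u hs', eq_comm]
    · simp_all [Adj, E.mult_to_v (by tauto : s ≠ u), eq_comm]
  by_cases hra : s = r ∧ t = a
  · simp_all [Adj, addBead, eq_comm]
  · push Not at hs ht
    rw [Adj, addBead_mult hs ht hra]
    tauto

lemma inDeg_addBead (hw : w ∈ B.verts) : (addBead B r a u v).inDeg w = B.inDeg w := by
  have hwu := E.ne_u_of_mem hw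
  have hwv := E.ne_v_of_mem hw
  by_cases hwa : w = a
  · subst hwa
    rw [inDeg_eq_mult E.root.1 E.a_in, E.mult_ra, inDeg_eq_mult mem_addBead_bottom fun q hq => ?_,
      E.mult_va]
    by_cases h : q = u ∨ q = r
    · rcases h with rfl | rfl
      · exact E.mult_from_u hwv
      · simp [addBead]
    · push Not at h
      by_cases hqB : q ∈ B.verts
      · rw [addBead_mult ⟨h.1, hq⟩ ⟨hwu, hwv⟩ (by tauto)]
        exact E.a_in q h.2
      · simp [addBead, h.1, hq, hwu, hwv, mult_eq_zero_of_left_notMem E.supported hqB]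
  refine (inDeg_eq_of_subset (fun _ => mem_addBead_of_mem)
    (fun q hq => (addBead_mult ⟨E.ne_u_of_mem hq, E.ne_v_of_mem hq⟩ ⟨hwu, hwv⟩ (by tauto)).symm)
    fun q hq hqB => ?_).symm
  rcases mem_addBead.mp hq with rfl | rfl | hq
  · exact E.mult_from_u hwv
  · exact E.mult_from_v hwa
  · exact absurd hq hqB

lemma outDeg_addBead (hw : w ∈ B.verts) : (addBead B r a u v).outDeg w = B.outDeg w := by
  have hwu := E.ne_u_of_mem hw
  by_cases hwr : w = r
  · subst hwr
    rw [E.root.2.2, outDeg_eq_mult mem_addBead_top fun q hq => ?_, E.mult_ru]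
    by_cases hqa : q = a
    · simp [addBead, hqa]
    · by_cases hqv : q = v
      · exact hqv ▸ E.mult_to_v hwu
      · by_cases hqB : q ∈ B.verts
        · rw [addBead_mult ⟨hwu, E.ne_v_of_mem hw⟩ ⟨hq, hqv⟩ (by tauto)]
          exact E.r_out q hqa
        · simp [addBead, hq, hqv, hqa, hwu, E.ne_v_of_mem hw,
            mult_eq_zero_of_right_notMem E.supported hqB]
  refine (outDeg_eq_of_subset (fun _ => mem_addBead_of_mem)
    (fun q hq => (addBead_mult ⟨hwu, E.ne_v_of_mem hw⟩
      ⟨E.ne_u_of_mem hq, E.ne_v_of_mem hq⟩ (by tauto)).symm) fun q hq hqB => ?_).symm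
  rcases mem_addBead.mp hq with rfl | rfl | hq
  · exact E.mult_to_u hwr
  · exact E.mult_to_v hwu
  · exact absurd hq hqB

lemma isTreeNode_u : (addBead B r a u v).IsTreeNode u :=
  ⟨mem_addBead_top, (inDeg_eq_mult (mem_addBead_of_mem E.root.1) fun _ => E.mult_to_u).trans
    E.mult_ru, (outDeg_eq_mult mem_addBead_bottom fun _ => E.mult_from_u).trans E.mult_uv⟩

lemma isRetic_v : (addBead B r a u v).IsRetic v :=
  ⟨mem_addBead_bottom, (inDeg_eq_mult mem_addBead_top fun _ => E.mult_to_v).trans E.mult_uv,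
    (outDeg_eq_mult (mem_addBead_of_mem E.a_mem) fun _ => E.mult_from_v).trans E.mult_va⟩

lemma isRoot_addBead : (addBead B r a u v).IsRoot r :=
  ⟨mem_addBead_of_mem E.root.1, (E.inDeg_addBead E.root.1).trans E.root.2.1,
    (E.outDeg_addBead E.root.1).trans E.root.2.2⟩

lemma hasBeadAtRoot_addBead : (addBead B r a u v).HasBeadAtRoot :=
  ⟨r, u, v, E.isRoot_addBead, by simp [Adj, E.mult_ru], E.mult_uv⟩

/-- The new nodes are ranked between `r` and its old child `a`. -/
lemma acyclic_addBead (hA : B.Acyclic) : (addBead B r a u v).Acyclic := by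
  have hra := numAncestors_lt_of_adj hA E.supported (show B.Adj r a by simp [Adj, E.mult_ra])
  set f : ℕ → ℕ := fun w => if w = u then 3 * B.numAncestors r + 1
    else if w = v then 3 * B.numAncestors r + 2 else 3 * B.numAncestors w with hf
  have hfu : f u = 3 * B.numAncestors r + 1 := by simp [hf]
  have hfv : f v = 3 * B.numAncestors r + 2 := by simp [hf, E.u_ne_v.symm]
  have hfw : ∀ w, w ≠ u → w ≠ v → f w = 3 * B.numAncestors w := fun w h1 h2 => by
    simp [hf, h1, h2]
  refine acyclic_of_forall_adj_lt f fun s t hst => ?_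
  rcases E.adj_addBead.mp hst with ⟨rfl, rfl⟩ | ⟨rfl, rfl⟩ | ⟨rfl, rfl⟩ | ⟨hst, hs, ht, -⟩
  · rw [hfw _ (E.ne_u_of_mem E.root.1) (E.ne_v_of_mem E.root.1), hfu]
    omega
  · rw [hfu, hfv]
    omega
  · rw [hfv, hfw _ (E.ne_u_of_mem E.a_mem) (E.ne_v_of_mem E.a_mem)]
    omega
  · rw [hfw _ hs.1 hs.2, hfw _ ht.1 ht.2]
    have := numAncestors_lt_of_adj hA E.supported hst
    omega

lemma isNetwork_addBead (hN : B.IsNetwork X) : (addBead B r a u v).IsNetwork X := by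
  refine hN.of_agree (E.acyclic_addBead hN.acyclic) (fun s t hst => ?_) rfl
    (fun w _ hw => ⟨E.inDeg_addBead hw, E.outDeg_addBead hw⟩) (fun w hw hw' => ?_)
    (fun w hw hw' => absurd (mem_addBead_of_mem hw) hw')
  · rcases E.adj_addBead.mp hst with ⟨rfl, rfl⟩ | ⟨rfl, rfl⟩ | ⟨rfl, rfl⟩ | ⟨hst, -⟩
    · exact ⟨mem_addBead_of_mem E.root.1, mem_addBead_top⟩
    · exact ⟨mem_addBead_top, mem_addBead_bottom⟩
    · exact ⟨mem_addBead_bottom, mem_addBead_of_mem E.a_mem⟩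
    · exact ⟨mem_addBead_of_mem (hN.supported s t hst).1,
        mem_addBead_of_mem (hN.supported s t hst).2⟩
  · rcases mem_addBead.mp hw with rfl | rfl | hw
    · exact .inl E.isTreeNode_u
    · exact .inr E.isRetic_v
    · exact absurd hw hw'

lemma isBeadedTree_addBead (hB : B.IsBeadedTree X) : (addBead B r a u v).IsBeadedTree X := by
  refine ⟨E.isNetwork_addBead hB.1, fun w hw hw2 => ?_⟩
  rcases mem_addBead.mp hw with rfl | rfl | hwB
  · have := E.isTreeNode_u.2.1
    omega
  · exact ⟨u, E.mult_uv⟩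
  · obtain ⟨p, hp⟩ := hB.2 w hwB ((E.inDeg_addBead hwB).symm.trans hw2)
    have hpB := (E.supported p w (by unfold Adj; omega)).1
    have hpw : ¬ (p = r ∧ w = a) := fun ⟨hpr, hwa⟩ => by simp [hpr, hwa, E.mult_ra] at hp
    exact ⟨p, (addBead_mult ⟨E.ne_u_of_mem hpB, E.ne_v_of_mem hpB⟩
      ⟨E.ne_u_of_mem hwB, E.ne_v_of_mem hwB⟩ hpw).trans hp⟩

lemma reticNum_addBead : (addBead B r a u v).reticNum = B.reticNum + 1 := by
  have hdiff : (addBead B r a u v).verts \ B.verts = {u, v} := by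
    ext w
    simp only [Finset.mem_sdiff, mem_addBead, Finset.mem_insert, Finset.mem_singleton]
    constructor
    · tauto
    · rintro (rfl | rfl)
      · exact ⟨.inl rfl, E.u_not_mem⟩
      · exact ⟨.inr (.inl rfl), E.v_not_mem⟩
  rw [reticNum_eq_of_subset (fun _ => mem_addBead_of_mem)
    fun w hw => ⟨(E.inDeg_addBead hw).symm, (E.outDeg_addBead hw).symm⟩, hdiff,
    Finset.filter_insert, Finset.filter_singleton]
  simp [E.isTreeNode_u.2.1, E.isRetic_v.2.1, E.isRetic_v.2.2]

lemma isWalk_addBead (hw : B.IsWalk p s t) (hs : s ≠ r) : (addBead B r a u v).IsWalk p s t := by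
  refine hw.mono fun e he hok => ?_
  have h1 : e.1 ≠ r := fun h =>
    hs (eq_of_reaches_of_mult_eq_zero (fun _ => E.r_in) (h ▸ hw.reaches_of_mem he))
  have hmem := E.supported _ _ hok.adj
  change e.2.2 < (addBead B r a u v).mult e.1 e.2.1
  rw [addBead_mult ⟨E.ne_u_of_mem hmem.1, E.ne_v_of_mem hmem.1⟩
    ⟨E.ne_u_of_mem hmem.2, E.ne_v_of_mem hmem.2⟩ (fun h => h1 h.1)]
  exact hok

/-- A root path of `B` starts with the arc `r → a`; replacing it by a copy of the bead and the arc
`v → a` gives a path from the top of the bead. -/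
lemma exists_isWalk_through_bead (hN : B.IsNetwork X) (hz : z ∈ B.verts) (hzr : z ≠ r) {i : ℕ}
    (hi : i < 2) : ∃ q, (addBead B r a u v).IsWalk ((u, v, i) :: (v, a, 0) :: q) u z := by
  obtain ⟨W, hW⟩ := hN.exists_isWalk_of_root E.root hz hzr
  obtain ⟨e, q, rfl⟩ := List.exists_cons_of_ne_nil hW.1
  obtain ⟨he1, he, hq⟩ := isWalk_cons_iff.mp hW
  have hea : e.2.1 = a := by_contra fun h => by
    have := he.adj
    rw [he1, Adj, E.r_out _ h] at this
    omega
  refine ⟨q, isWalk_cons_iff.mpr ⟨rfl, ?_, .inr (isWalk_cons_iff.mpr ⟨rfl, ?_, ?_⟩)⟩⟩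
  · change i < _
    rw [E.mult_uv]
    exact hi
  · change 0 < _
    rw [E.mult_va]
    omega
  · rcases hq with ⟨hq, hz⟩ | hq
    · exact .inl ⟨hq, hea ▸ hz⟩
    · exact .inr (E.isWalk_addBead (hea ▸ hq) E.r_ne_a.symm)

variable (C : TopSplit Y T rT x y y') (hemb : WeakEmbedding (f1del T rT x y y') B h hE)
include C hemb

lemma map_ne_root (hw : w ∈ (f1del T rT x y y').verts) (hwr : w ≠ rT) : h w ≠ r := by
  obtain ⟨q, -, hq⟩ := exists_adj_of_inDeg_pos (G := f1del T rT x y y') (by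
    rw [C.inDeg_f1del hw hwr, C.mulTree.inDeg_eq_one C.root (mem_f1del.mp hw).1 hwr]
    exact one_pos)
  exact hemb.map_ne_of_mult_eq_zero hq fun _ => E.r_in

lemma isWalk_addBead_of_f1del (hst : T.Adj s t) (hsr : s ≠ rT) (hsx : s ≠ x)
    (hs : ¬ T.Reaches y' s) : (addBead B r a u v).IsWalk (hE s t) (h s) (h t) :=
  E.isWalk_addBead (hemb.2.2.1 s t (C.adj_f1del_of_adj hst hsr hsx hs))
    (E.map_ne_root C hemb (mem_f1del.mpr ⟨(C.mulTree.supported s t hst).1, hs, hsx⟩) hsr)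

lemma isLeafNode_addBead_of_f1del (hw : T.IsLeafNode w) (hw' : ¬ T.Reaches y' w) :
    (addBead B r a u v).IsLeafNode (h w) ∧ (addBead B r a u v).label (h w) = T.label w := by
  have hwx := C.ne_top_of_isLeafNode hw
  obtain ⟨hl, hlab⟩ := hemb.2.1 w (C.isLeafNode_f1del_iff.mpr ⟨mem_f1del.mpr ⟨hw.1, hw', hwx⟩, hw⟩)
  exact ⟨⟨mem_addBead_of_mem hl.1, (E.inDeg_addBead hl.1).trans hl.2.1,
    (E.outDeg_addBead hl.1).trans hl.2.2⟩, hlab.trans (label_f1del hwx hw')⟩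

variable {h' : ℕ → ℕ} {hE' : ℕ → ℕ → List Arc} (hemb' : WeakEmbedding (f1del T rT x y' y) B h' hE')
include hemb'

lemma isWalk_addBead_glue (hst : T.Adj s t) (hsr : s ≠ rT) (hsx : s ≠ x) :
    (addBead B r a u v).IsWalk (if T.Reaches y' s then hE' s t else hE s t)
      (if T.Reaches y' s then h' s else h s) (if T.Reaches y' t then h' t else h t) := by
  by_cases hs : T.Reaches y' s
  · rw [if_pos hs, if_pos hs, if_pos ((C.reaches_right_iff hst hsx).mpr hs)]
    exact E.isWalk_addBead_of_f1del C.swap hemb' hst hsr hsx (C.not_reaches_left hs)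
  · rw [if_neg hs, if_neg hs, if_neg (mt (C.reaches_right_iff hst hsx).mp hs)]
    exact E.isWalk_addBead_of_f1del C hemb hst hsr hsx hs

lemma isLeafNode_addBead_glue (hw : T.IsLeafNode w) :
    (addBead B r a u v).IsLeafNode (if T.Reaches y' w then h' w else h w) ∧
      (addBead B r a u v).label (if T.Reaches y' w then h' w else h w) = T.label w := by
  split_ifs with hw'
  · exact E.isLeafNode_addBead_of_f1del C.swap hemb' hw (C.not_reaches_left hw')
  · exact E.isLeafNode_addBead_of_f1del C hemb hw hw'

end AddBeadData

/-- The root edge goes to `r → u`, the two edges below `x` to the two copies of the bead followed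
by root paths of `B`, and every other edge is embedded as in the member of `F1(T)` containing it. -/
lemma AddBeadData.displays_of_displays_f1del {X Y : Finset ℕ} {B T : DG} {r a u v rT x y y' : ℕ}
    (E : AddBeadData B r a u v) (hN : B.IsNetwork X) (C : TopSplit Y T rT x y y')
    (hd : B.Displays (f1del T rT x y y')) (hd' : B.Displays (f1del T rT x y' y)) :
    (addBead B r a u v).Displays T := by
  obtain ⟨h, hE, hemb⟩ := hd
  obtain ⟨h', hE', hemb'⟩ := hd'
  obtain ⟨q, hq⟩ := E.exists_isWalk_through_bead hN (hemb.1 y C.left_mem_f1del)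
    (E.map_ne_root C hemb C.left_mem_f1del C.left_ne_root) (i := 0) (by norm_num)
  obtain ⟨q', hq'⟩ := E.exists_isWalk_through_bead hN (hemb'.1 y' C.swap.left_mem_f1del)
    (E.map_ne_root C.swap hemb' C.swap.left_mem_f1del C.swap.left_ne_root) (i := 1) (by norm_num)
  refine ⟨fun w => if w = rT then r else if w = x then u
      else if T.Reaches y' w then h' w else h w,
    fun s t => if s = rT then [(r, u, 0)]
      else if s = x then
        (if t = y then (u, v, 0) :: (v, a, 0) :: q else (u, v, 1) :: (v, a, 0) :: q')
      else if T.Reaches y' s then hE' s t else hE s t,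
    fun w hw => ?_, fun w hw => ?_, fun s t hst => ?_, fun s t t' ht ht' hne => ?_⟩
  · dsimp only
    split_ifs with hwr hwx hwy'
    · exact mem_addBead_of_mem E.root.1
    · exact mem_addBead_top
    · exact mem_addBead_of_mem (hemb'.1 w (mem_f1del.mpr ⟨hw, C.not_reaches_left hwy', hwx⟩))
    · exact mem_addBead_of_mem (hemb.1 w (mem_f1del.mpr ⟨hw, hwy', hwx⟩))
  · simp only [if_neg (C.ne_root_of_isLeafNode hw), if_neg (C.ne_top_of_isLeafNode hw)]
    exact E.isLeafNode_addBead_glue C hemb hemb' hw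
  · have htr := C.ne_root_of_adj hst
    by_cases hsr : s = rT
    · subst hsr
      obtain rfl := C.eq_of_adj_root hst
      simp only [if_true, if_neg htr]
      exact isWalk_cons_iff.mpr ⟨rfl, by change 0 < _; rw [E.mult_ru]; omega, .inl ⟨rfl, rfl⟩⟩
    by_cases hsx : s = x
    · subst hsx
      rcases C.eq_of_adj_top hst with rfl | rfl
      · simpa [hsr, htr, C.left_ne_top, C.not_reaches_right_left] using hq
      · simpa [hsr, htr, C.ne.symm, C.swap.left_ne_top, show T.Reaches t t from .refl] using hq'
    simp only [if_neg hsr, if_neg hsx, if_neg htr, if_neg (C.ne_top_of_adj hst hsr)]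
    exact E.isWalk_addBead_glue C hemb hemb' hst hsr hsx
  · dsimp only
    by_cases hsr : s = rT
    · subst hsr
      exact absurd ((C.eq_of_adj_root ht).trans (C.eq_of_adj_root ht').symm) hne
    by_cases hsx : s = x
    · subst hsx
      rcases C.eq_of_adj_top ht with rfl | rfl <;> rcases C.eq_of_adj_top ht' with rfl | rfl <;>
        simp_all [C.ne.symm]
    simp only [if_neg hsr, if_neg hsx]
    exact C.head_ne_glue hemb hemb' ht ht' hne hsr hsx

end DG

/-- Lemma 3: there is a solution to Beaded Tree on `𝒯` with a
bead at the root and reticulation number `k` iff `F1(𝒯)` has a solution with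
reticulation number `k-1`. -/
theorem bead_at_root_iff_F1_solution (X : Finset ℕ) (Ts : Set DG)
    (hT : ∀ T ∈ Ts, DG.IsMulTree X T ∧ 1 < T.numLeaves) (k : ℕ) :
    (∃ B : DG, DG.Solution X Ts B ∧ B.HasBeadAtRoot ∧ B.reticNum = k) ↔
    (∃ B' : DG, DG.Solution X (DG.F1Set Ts) B' ∧ B'.reticNum + 1 = k) := by
  constructor
  · rintro ⟨B, ⟨hB, hdisp⟩, hbead, rfl⟩
    obtain ⟨r, u, v, a, D⟩ := hB.exists_beadData hbead
    refine ⟨DG.delBead B r u v a, ⟨D.isBeadedTree_delBead hB, ?_⟩, D.reticNum_delBead⟩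
    rintro _ ⟨T, hTs, rT, x, y, y', hr, hx, hy, hy', hne, rfl⟩
    exact D.displays_f1del hB.1 ⟨(hT T hTs).1, hr, hx, hy, hy', hne⟩ (hdisp T hTs)
  · rintro ⟨B, ⟨hB, hdisp⟩, rfl⟩
    obtain ⟨r, a, u, v, E⟩ := hB.exists_addBeadData
    refine ⟨DG.addBead B r a u v, ⟨E.isBeadedTree_addBead hB, fun T hTs => ?_⟩,
      E.hasBeadAtRoot_addBead, E.reticNum_addBead⟩
    obtain ⟨rT, x, y, y', C⟩ := (hT T hTs).1.exists_topSplit (hT T hTs).2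
    exact E.displays_of_displays_f1del hB.1 C
      (hdisp _ ⟨T, hTs, rT, x, y, y', C.root, C.adj_root, C.adj_left, C.adj_right, C.ne, rfl⟩)
      (hdisp _ ⟨T, hTs, rT, x, y', y, C.root, C.adj_root, C.adj_right, C.adj_left, C.ne.symm, rfl⟩)
end

section
/- Let B be a beaded tree on a finite species set X that weakly displays every MUL-tree in a set 𝒯, and let S be a nonempty proper subset of X. Then B∖S is a beaded tree on X∖S that weakly displays every MUL-tree in 𝒯∖S, and the reticulation number of B∖S is at most the reticulation number of B. -/
/-!
Common formal framework for MUL-trees, phylogenetic networks, beaded trees,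
duplication trees, weak embeddings and related operations, following
van Iersel, Janssen, Jones, Murakami, Zeh,
"Polynomial-Time Algorithms for Phylogenetic Inference Problems involving
duplication and reticulation".

All graphs are directed multigraphs on natural-number vertices, given by a
finite vertex set, an edge-multiplicity function and a (partial) leaf
labelling by species (also natural numbers).
-/

open scoped Classical

/-!
Each restriction step removes a single node `v` that has at most one child and no label outside
`S`, keeps every other in-degree and does not decrease any other multiplicity. Hence the degree
and bead conditions of a beaded tree survive every step, reticulations are never created, and
once no step applies, every remaining node has one of the shapes allowed in a network on `X \ S`.

For the displays, a weak embedding of a MUL-tree `T` into `B` is first carried along the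
restriction of `T` (suppressing `v` in `T` concatenates the image paths of `p → v` and `v → c`)
and then along the restriction of `B`. The node removed from `B` is never the image of a leaf or
of a node with two children of the restricted tree, so a deletion leaves the embedding intact and
a suppression only reroutes the paths through `v` along the new arc `p → c`.
-/

namespace DG

section Degrees

variable {G : DG} {a b u v p c : ℕ}

lemma mult_eq_zero_of_notMem_left (hG : G.Supported) (hu : u ∉ G.verts) : G.mult u v = 0 :=
  Nat.eq_zero_of_not_pos fun h => hu (hG u v h).1

lemma mult_eq_zero_of_notMem_right (hG : G.Supported) (hv : v ∉ G.verts) : G.mult u v = 0 :=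
  Nat.eq_zero_of_not_pos fun h => hv (hG u v h).2

lemma mult_le_inDeg_s15 (hu : u ∈ G.verts) : G.mult u v ≤ G.inDeg v :=
  Finset.single_le_sum (f := fun a => G.mult a v) (fun _ _ => Nat.zero_le _) hu

lemma mult_le_outDeg_s15 (hv : v ∈ G.verts) : G.mult u v ≤ G.outDeg u :=
  Finset.single_le_sum (f := fun b => G.mult u b) (fun _ _ => Nat.zero_le _) hv

lemma mult_add_mult_le_inDeg_s15 (ha : a ∈ G.verts) (hb : b ∈ G.verts) (hab : a ≠ b) :
    G.mult a v + G.mult b v ≤ G.inDeg v := by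
  rw [← Finset.sum_pair (f := fun x => G.mult x v) hab]
  exact Finset.sum_le_sum_of_subset (Finset.insert_subset ha (Finset.singleton_subset_iff.2 hb))

lemma mult_add_mult_le_outDeg_s15 (ha : a ∈ G.verts) (hb : b ∈ G.verts) (hab : a ≠ b) :
    G.mult u a + G.mult u b ≤ G.outDeg u := by
  rw [← Finset.sum_pair (f := fun x => G.mult u x) hab]
  exact Finset.sum_le_sum_of_subset (Finset.insert_subset ha (Finset.singleton_subset_iff.2 hb))

lemma mult_eq_zero_of_outDeg_eq_zero (hG : G.Supported) (h : G.outDeg u = 0) (v : ℕ) :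
    G.mult u v = 0 := by
  by_cases hv : v ∈ G.verts
  · exact Nat.eq_zero_of_le_zero (h ▸ mult_le_outDeg_s15 hv)
  · exact mult_eq_zero_of_notMem_right hG hv

lemma mult_eq_zero_of_inDeg_eq_one (hG : G.Supported) (hv : G.inDeg v = 1)
    (hp : G.mult p v = 1) (ha : a ≠ p) : G.mult a v = 0 := by
  by_cases haG : a ∈ G.verts
  · have := mult_add_mult_le_inDeg_s15 (v := v) (hG p v (show 0 < G.mult p v by omega)).1 haG ha.symm
    omega
  · exact mult_eq_zero_of_notMem_left hG haG

lemma mult_eq_zero_of_outDeg_eq_one (hG : G.Supported) (hv : G.outDeg v = 1)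
    (hc : G.mult v c = 1) (hb : b ≠ c) : G.mult v b = 0 := by
  by_cases hbG : b ∈ G.verts
  · have := mult_add_mult_le_outDeg_s15 (u := v) (hG v c (show 0 < G.mult v c by omega)).2 hbG hb.symm
    omega
  · exact mult_eq_zero_of_notMem_right hG hbG

lemma exists_mult_pos_of_inDeg_pos (h : 0 < G.inDeg v) : ∃ u ∈ G.verts, 0 < G.mult u v :=
  Finset.sum_pos_iff.1 h

lemma exists_mult_pos_of_outDeg_pos (h : 0 < G.outDeg u) : ∃ v ∈ G.verts, 0 < G.mult u v :=
  Finset.sum_pos_iff.1 h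

lemma exists_mult_eq_one_of_inDeg_eq_one (h : G.inDeg v = 1) : ∃ u, G.mult u v = 1 := by
  obtain ⟨u, hu, hpos⟩ := exists_mult_pos_of_inDeg_pos (G := G) (v := v) (by omega)
  exact ⟨u, by have := mult_le_inDeg_s15 (v := v) hu; omega⟩

lemma exists_mult_eq_one_of_outDeg_eq_one (h : G.outDeg u = 1) : ∃ v, G.mult u v = 1 := by
  obtain ⟨v, hv, hpos⟩ := exists_mult_pos_of_outDeg_pos (G := G) (u := u) (by omega)
  exact ⟨v, by have := mult_le_outDeg_s15 (u := u) hv; omega⟩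

lemma exists_adj_adj_ne (hmult : ∀ v, G.mult u v ≤ 1) (h : 2 ≤ G.outDeg u) :
    ∃ y y', G.Adj u y ∧ G.Adj u y' ∧ y ≠ y' := by
  obtain ⟨y, hy, hy0⟩ := exists_mult_pos_of_outDeg_pos (G := G) (u := u) (by omega)
  have hrest : 0 < ∑ b ∈ G.verts.erase y, G.mult u b := by
    have := Finset.add_sum_erase _ (fun b => G.mult u b) hy
    have := hmult y
    unfold outDeg at h
    omega
  obtain ⟨y', hy', hy'0⟩ := Finset.sum_pos_iff.1 hrest
  exact ⟨y, y', hy0, hy'0, (Finset.ne_of_mem_erase hy').symm⟩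

end Degrees

section Ancestors

variable {G : DG} {a b w : ℕ}

lemma SReaches.mem_verts (hG : G.Supported) (h : G.SReaches a b) :
    a ∈ G.verts ∧ b ∈ G.verts := by
  obtain ⟨c, hac, -⟩ := Relation.TransGen.head'_iff.1 h
  obtain ⟨d, -, hdb⟩ := Relation.TransGen.tail'_iff.1 h
  exact ⟨(hG a c hac).1, (hG d b hdb).2⟩

/-- Ancestor sets strictly shrink along `SReaches`. -/
lemma wellFounded_sReaches (hG : G.Supported) (hacyc : G.Acyclic) :
    WellFounded G.SReaches := by
  refine Subrelation.wf (fun {a b} hab => ?_)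
    (measure fun v => (G.verts.filter (G.SReaches · v)).card).wf
  refine Finset.card_lt_card ⟨fun u hu => ?_, fun hsub => ?_⟩
  · simp only [Finset.mem_filter] at hu ⊢
    exact ⟨hu.1, hu.2.trans hab⟩
  · have ha : a ∈ G.verts.filter (G.SReaches · b) :=
      Finset.mem_filter.2 ⟨(hab.mem_verts hG).1, hab⟩
    exact hacyc a (Finset.mem_filter.1 (hsub ha)).2

lemma exists_inDeg_eq_zero_reaches (hG : G.Supported) (hacyc : G.Acyclic) (hw : w ∈ G.verts) :
    ∃ r ∈ G.verts, G.inDeg r = 0 ∧ G.Reaches r w := by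
  induction w using (wellFounded_sReaches hG hacyc).induction with
  | _ w ih =>
  by_cases h0 : G.inDeg w = 0
  · exact ⟨w, hw, h0, .refl⟩
  · obtain ⟨q, hq, hqw⟩ := exists_mult_pos_of_inDeg_pos (Nat.pos_of_ne_zero h0)
    obtain ⟨r, hr, hr0, hrq⟩ := ih q (.single hqw) hq
    exact ⟨r, hr, hr0, hrq.tail hqw⟩

end Ancestors

section DeleteNode

variable {G : DG} {d a b w : ℕ}

lemma deleteNode_mult (ha : a ≠ d) (hb : b ≠ d) : (G.deleteNode d).mult a b = G.mult a b := by
  simp [deleteNode, ha, hb]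

lemma deleteNode_adj (h : (G.deleteNode d).Adj a b) : G.Adj a b ∧ a ≠ d ∧ b ≠ d := by
  by_cases had : a = d ∨ b = d
  · simp [Adj, deleteNode, had] at h
  · push Not at had
    refine ⟨?_, had⟩
    unfold Adj at h ⊢
    rwa [deleteNode_mult had.1 had.2] at h

lemma deleteNode_inDeg (hG : G.Supported) (hd : G.outDeg d = 0) (hw : w ≠ d) :
    (G.deleteNode d).inDeg w = G.inDeg w := by
  have hsum : (G.deleteNode d).inDeg w = ∑ u ∈ G.verts.erase d, G.mult u w :=
    Finset.sum_congr rfl fun u hu => deleteNode_mult (Finset.ne_of_mem_erase hu) hw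
  rw [hsum, Finset.sum_erase (f := fun u => G.mult u w) _ (mult_eq_zero_of_outDeg_eq_zero hG hd w)]
  rfl

lemma deleteNode_outDeg_le : (G.deleteNode d).outDeg w ≤ G.outDeg w :=
  (Finset.sum_le_sum fun b _ => by simp only [deleteNode]; split <;> omega).trans
    (Finset.sum_le_sum_of_subset (Finset.erase_subset _ _))

end DeleteNode

section SuppressNode

variable {G : DG} {v p c a b w : ℕ}

lemma suppressNode_mult (ha : a ≠ v) (hb : b ≠ v) :
    (G.suppressNode v p c).mult a b = G.mult a b + if a = p ∧ b = c then 1 else 0 := by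
  simp only [suppressNode, ha, hb, or_self, if_false]
  split_ifs <;> rfl

lemma suppressNode_adj_ne (h : (G.suppressNode v p c).Adj a b) : a ≠ v ∧ b ≠ v := by
  by_contra hab
  rw [not_and_or, not_not, not_not] at hab
  simp [Adj, suppressNode, hab] at h

lemma suppressNode_adj (h : (G.suppressNode v p c).Adj a b) : G.Adj a b ∨ (a = p ∧ b = c) := by
  obtain ⟨ha, hb⟩ := suppressNode_adj_ne h
  by_cases hab : a = p ∧ b = c
  · exact .inr hab
  · left
    unfold Adj at h ⊢
    simpa [suppressNode_mult ha hb, hab] using h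

structure Suppressible (G : DG) (v p c : ℕ) : Prop where
  supported : G.Supported
  acyclic : G.Acyclic
  mem : v ∈ G.verts
  mult_in : G.mult p v = 1
  inDeg_eq_one : G.inDeg v = 1
  mult_out : G.mult v c = 1
  outDeg_eq_one : G.outDeg v = 1

namespace Suppressible

lemma adj_in (H : Suppressible G v p c) : G.Adj p v :=
  show 0 < G.mult p v by rw [H.mult_in]; exact Nat.one_pos

lemma adj_out (H : Suppressible G v p c) : G.Adj v c :=
  show 0 < G.mult v c by rw [H.mult_out]; exact Nat.one_pos

lemma parent_mem (H : Suppressible G v p c) : p ∈ G.verts := (H.supported p v H.adj_in).1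

lemma child_mem (H : Suppressible G v p c) : c ∈ G.verts := (H.supported v c H.adj_out).2

lemma parent_ne (H : Suppressible G v p c) : p ≠ v := by
  rintro rfl
  exact H.acyclic p (.single H.adj_in)

lemma ne_child (H : Suppressible G v p c) : v ≠ c := by
  rintro rfl
  exact H.acyclic v (.single H.adj_out)

lemma mult_in_eq_zero (H : Suppressible G v p c) (ha : a ≠ p) : G.mult a v = 0 :=
  mult_eq_zero_of_inDeg_eq_one H.supported H.inDeg_eq_one H.mult_in ha

lemma mult_out_eq_zero (H : Suppressible G v p c) (hb : b ≠ c) : G.mult v b = 0 :=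
  mult_eq_zero_of_outDeg_eq_one H.supported H.outDeg_eq_one H.mult_out hb

lemma inDeg_eq (H : Suppressible G v p c) (hw : w ≠ v) :
    (G.suppressNode v p c).inDeg w = G.inDeg w := by
  have hsum : (G.suppressNode v p c).inDeg w = ∑ u ∈ G.verts.erase v, G.mult u w +
      ∑ u ∈ G.verts.erase v, if u = p ∧ w = c then 1 else 0 := by
    rw [← Finset.sum_add_distrib]
    exact Finset.sum_congr rfl fun u hu => suppressNode_mult (Finset.ne_of_mem_erase hu) hw
  have hv : G.mult v w + ∑ u ∈ G.verts.erase v, G.mult u w = G.inDeg w :=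
    Finset.add_sum_erase _ (fun u => G.mult u w) H.mem
  have hp : p ∈ G.verts.erase v := Finset.mem_erase.2 ⟨H.parent_ne, H.parent_mem⟩
  by_cases hwc : w = c
  · subst hwc
    simp only [and_true, Finset.sum_ite_eq', hp, if_true] at hsum
    have := H.mult_out
    omega
  · simp only [hwc, and_false, if_false, Finset.sum_const_zero] at hsum
    have := H.mult_out_eq_zero hwc
    omega

lemma outDeg_eq (H : Suppressible G v p c) (hw : w ≠ v) :
    (G.suppressNode v p c).outDeg w = G.outDeg w := by
  have hsum : (G.suppressNode v p c).outDeg w = ∑ b ∈ G.verts.erase v, G.mult w b +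
      ∑ b ∈ G.verts.erase v, if w = p ∧ b = c then 1 else 0 := by
    rw [← Finset.sum_add_distrib]
    exact Finset.sum_congr rfl fun b hb => suppressNode_mult hw (Finset.ne_of_mem_erase hb)
  have hv : G.mult w v + ∑ b ∈ G.verts.erase v, G.mult w b = G.outDeg w :=
    Finset.add_sum_erase _ (fun b => G.mult w b) H.mem
  have hc : c ∈ G.verts.erase v := Finset.mem_erase.2 ⟨H.ne_child.symm, H.child_mem⟩
  by_cases hwp : w = p
  · subst hwp
    simp only [true_and, Finset.sum_ite_eq', hc, if_true] at hsum
    have := H.mult_in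
    omega
  · simp only [hwp, false_and, if_false, Finset.sum_const_zero] at hsum
    have := H.mult_in_eq_zero hwp
    omega

lemma sReaches_of_adj (H : Suppressible G v p c) (h : (G.suppressNode v p c).Adj a b) :
    G.SReaches a b := by
  rcases suppressNode_adj h with hab | ⟨rfl, rfl⟩
  · exact .single hab
  · exact .tail (.single H.adj_in) H.adj_out

end Suppressible

end SuppressNode

/-- The common effect of the two kinds of restriction step, each of which removes one node `v`. -/
structure RemovesNode (S : Finset ℕ) (G G' : DG) (v : ℕ) : Prop where
  mem : v ∈ G.verts
  outDeg_le_one : G.outDeg v ≤ 1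
  label_mem : ∀ x, G.label v = some x → x ∈ S
  verts_eq : G'.verts = G.verts.erase v
  label_eq : ∀ a, G'.label a = if a = v then none else G.label a
  inDeg_eq : ∀ w, w ≠ v → G'.inDeg w = G.inDeg w
  outDeg_le : ∀ w, w ≠ v → G'.outDeg w ≤ G.outDeg w
  mult_le : ∀ a b, a ≠ v → b ≠ v → G.mult a b ≤ G'.mult a b
  sReaches_of_adj : ∀ a b, G'.Adj a b → G.SReaches a b ∧ a ≠ v ∧ b ≠ v

structure IsLabelledDag (G : DG) : Prop where
  supported : G.Supported
  acyclic : G.Acyclic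
  isLeafNode_of_label : ∀ v x, G.label v = some x → G.IsLeafNode v

section Restriction

variable {S : Finset ℕ} {G G' : DG} {v w x : ℕ}

lemma removesNode_deleteNode (hG : G.Supported) (hv : v ∈ G.verts) (hout : G.outDeg v = 0)
    (hlab : ∀ x, G.label v = some x → x ∈ S) : RemovesNode S G (G.deleteNode v) v where
  mem := hv
  outDeg_le_one := hout.trans_le zero_le_one
  label_mem := hlab
  verts_eq := rfl
  label_eq _ := rfl
  inDeg_eq _ hw := deleteNode_inDeg hG hout hw
  outDeg_le _ _ := deleteNode_outDeg_le
  mult_le _ _ ha hb := (deleteNode_mult ha hb).ge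
  sReaches_of_adj _ _ h :=
    have h' := deleteNode_adj h
    ⟨.single h'.1, h'.2⟩

lemma Suppressible.removesNode {p c : ℕ} (H : Suppressible G v p c) (hlab : G.label v = none) :
    RemovesNode S G (G.suppressNode v p c) v where
  mem := H.mem
  outDeg_le_one := H.outDeg_eq_one.le
  label_mem x h := by rw [hlab] at h; cases h
  verts_eq := rfl
  label_eq _ := rfl
  inDeg_eq _ hw := H.inDeg_eq hw
  outDeg_le _ hw := (H.outDeg_eq hw).le
  mult_le _ _ ha hb := by rw [suppressNode_mult ha hb]; exact Nat.le_add_right _ _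
  sReaches_of_adj _ _ h := ⟨H.sReaches_of_adj h, suppressNode_adj_ne h⟩

lemma outDeg_eq_zero_of_del (hG : G.IsLabelledDag)
    (hcase : (∃ x ∈ S, G.label v = some x) ∨ (G.label v = none ∧ G.outDeg v = 0)) :
    G.outDeg v = 0 := by
  rcases hcase with ⟨x, -, hx⟩ | ⟨-, h0⟩
  exacts [(hG.isLeafNode_of_label v x hx).2.2, h0]

lemma label_mem_of_del
    (hcase : (∃ x ∈ S, G.label v = some x) ∨ (G.label v = none ∧ G.outDeg v = 0)) :
    ∀ x, G.label v = some x → x ∈ S := by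
  intro x hx
  rcases hcase with ⟨y, hy, hy'⟩ | ⟨hnone, -⟩
  · exact Option.some_inj.1 (hx.symm.trans hy') ▸ hy
  · simp [hnone] at hx

lemma IsLabelledDag.removesNode (hG : G.IsLabelledDag) (hst : RStep S G G') :
    ∃ v, RemovesNode S G G' v := by
  cases hst with
  | del v hv hcase =>
    exact ⟨v, removesNode_deleteNode hG.supported hv (outDeg_eq_zero_of_del hG hcase)
      (label_mem_of_del hcase)⟩
  | suppress v p c hv hlab hpv hin hvc hout =>
    have H : Suppressible G v p c := ⟨hG.supported, hG.acyclic, hv, hpv, hin, hvc, hout⟩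
    exact ⟨v, H.removesNode hlab⟩

namespace RemovesNode

lemma mem_verts_iff (h : RemovesNode S G G' v) : w ∈ G'.verts ↔ w ≠ v ∧ w ∈ G.verts := by
  rw [h.verts_eq, Finset.mem_erase]

lemma label_of_ne (h : RemovesNode S G G' v) (hw : w ≠ v) : G'.label w = G.label w := by
  rw [h.label_eq, if_neg hw]

lemma ne_of_label (h : RemovesNode S G G' v) (hw : G'.label w = some x) : w ≠ v := by
  rintro rfl
  simp [h.label_eq] at hw

lemma label_of_label (h : RemovesNode S G G' v) (hw : G'.label w = some x) :
    G.label w = some x := by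
  rwa [← h.label_of_ne (h.ne_of_label hw)]

lemma supported (h : RemovesNode S G G' v) (hG : G.Supported) : G'.Supported := by
  intro a b hab
  obtain ⟨hr, ha, hb⟩ := h.sReaches_of_adj a b hab
  have hmem := hr.mem_verts hG
  exact ⟨h.mem_verts_iff.2 ⟨ha, hmem.1⟩, h.mem_verts_iff.2 ⟨hb, hmem.2⟩⟩

lemma acyclic (h : RemovesNode S G G' v) (hG : G.Acyclic) : G'.Acyclic := by
  have hr : ∀ a b, G'.SReaches a b → G.SReaches a b := fun a b hab => by
    induction hab with
    | single hab => exact (h.sReaches_of_adj _ _ hab).1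
    | tail _ hbc ih => exact ih.trans (h.sReaches_of_adj _ _ hbc).1
  exact fun a ha => hG a (hr a a ha)

lemma isLeafNode (h : RemovesNode S G G' v) (hw : G.IsLeafNode w) (hwv : w ≠ v) :
    G'.IsLeafNode w :=
  ⟨h.mem_verts_iff.2 ⟨hwv, hw.1⟩, (h.inDeg_eq w hwv).trans hw.2.1,
    Nat.eq_zero_of_le_zero (hw.2.2 ▸ h.outDeg_le w hwv)⟩

lemma isLabelledDag (h : RemovesNode S G G' v) (hG : G.IsLabelledDag) : G'.IsLabelledDag where
  supported := h.supported hG.supported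
  acyclic := h.acyclic hG.acyclic
  isLeafNode_of_label _ _ hw :=
    h.isLeafNode (hG.isLeafNode_of_label _ _ (h.label_of_label hw)) (h.ne_of_label hw)

end RemovesNode

lemma IsLabelledDag.rStep (hG : G.IsLabelledDag) (hst : RStep S G G') : G'.IsLabelledDag :=
  have ⟨_, h⟩ := hG.removesNode hst
  h.isLabelledDag hG

lemma RStep.card_verts_lt (hst : RStep S G G') : G'.verts.card < G.verts.card := by
  cases hst with
  | del v hv _ => exact Finset.card_erase_lt_of_mem hv
  | suppress v p c hv _ _ _ _ _ => exact Finset.card_erase_lt_of_mem hv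

lemma exists_restricts (S : Finset ℕ) (G : DG) : ∃ G', Restricts S G G' := by
  induction G using (measure fun G : DG => G.verts.card).wf.induction with
  | _ G ih =>
  by_cases h : ∃ H, RStep S G H
  · obtain ⟨H, hst⟩ := h
    obtain ⟨G', hsteps, hterm⟩ := ih H hst.card_verts_lt
    exact ⟨G', .head hst hsteps, hterm⟩
  · exact ⟨G, .refl, fun H hst => h ⟨H, hst⟩⟩

end Restriction

section Terminal

variable {S : Finset ℕ} {G : DG} {v x : ℕ}

lemma label_notMem_of_terminal (hG : G.IsLabelledDag) (hterm : ∀ H, ¬ RStep S G H)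
    (hv : G.label v = some x) : x ∉ S := fun hx =>
  hterm _ (.del G v (hG.isLeafNode_of_label v x hv).1 (.inl ⟨x, hx, hv⟩))

lemma outDeg_ne_zero_of_terminal (hterm : ∀ H, ¬ RStep S G H) (hv : v ∈ G.verts)
    (hlab : G.label v = none) : G.outDeg v ≠ 0 := fun h0 =>
  hterm _ (.del G v hv (.inr ⟨hlab, h0⟩))

lemma outDeg_ne_one_of_terminal (hterm : ∀ H, ¬ RStep S G H) (hv : v ∈ G.verts)
    (hlab : G.label v = none) (hin : G.inDeg v = 1) : G.outDeg v ≠ 1 := fun hout => by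
  obtain ⟨p, hp⟩ := exists_mult_eq_one_of_inDeg_eq_one hin
  obtain ⟨c, hc⟩ := exists_mult_eq_one_of_outDeg_eq_one hout
  exact hterm _ (.suppress G v p c hv hlab hp hin hc hout)

lemma exists_label_of_terminal (hterm : ∀ H, ¬ RStep S G H) (hv : G.IsLeafNode v) :
    ∃ x, G.label v = some x := by
  cases hlab : G.label v with
  | none => exact absurd hv.2.2 (outDeg_ne_zero_of_terminal hterm hv.1 hlab)
  | some x => exact ⟨x, rfl⟩

end Terminal

/-- The properties of a MUL-tree that survive every restriction step. -/
structure MulPretree (G : DG) : Prop extends G.IsLabelledDag where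
  inDeg_le_one : ∀ v ∈ G.verts, G.inDeg v ≤ 1
  outDeg_le_two : ∀ v ∈ G.verts, G.outDeg v ≤ 2

/-- The shape of a MUL-tree once restriction has terminated. -/
structure IsReducedTree (S : Finset ℕ) (T : DG) : Prop where
  incident : ∀ w ∈ T.verts, (∃ u, T.Adj w u) ∨ (∃ u, T.Adj u w)
  label_of_isLeafNode : ∀ w, T.IsLeafNode w → ∃ x, T.label w = some x ∧ x ∉ S
  two_children : ∀ u w, T.Adj u w → ¬ T.IsLeafNode w →
    ∃ y y', T.Adj w y ∧ T.Adj w y' ∧ y ≠ y'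

section MulPretree

variable {X S : Finset ℕ} {T T' : DG} {v : ℕ}

lemma MulPretree.of_isMulTree (hT : IsMulTree X T) : MulPretree T where
  supported := hT.supported
  acyclic := hT.acyclic
  isLeafNode_of_label v x hv := (hT.labels v).1 ⟨x, hv⟩
  inDeg_le_one v hv := by
    rcases hT.nodes v hv with ⟨-, h⟩ | ⟨-, h⟩ | ⟨-, h⟩ <;> omega
  outDeg_le_two v hv := by
    rcases hT.nodes v hv with ⟨-, h⟩ | ⟨-, h⟩ | ⟨-, h⟩ <;> omega

lemma MulPretree.mult_le_one (hT : MulPretree T) (a b : ℕ) : T.mult a b ≤ 1 := by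
  by_cases ha : a ∈ T.verts
  · by_cases hb : b ∈ T.verts
    · exact (mult_le_inDeg_s15 ha).trans (hT.inDeg_le_one b hb)
    · exact (mult_eq_zero_of_notMem_right hT.supported hb).trans_le zero_le_one
  · exact (mult_eq_zero_of_notMem_left hT.supported ha).trans_le zero_le_one

lemma RemovesNode.mulPretree (h : RemovesNode S T T' v) (hT : MulPretree T) :
    MulPretree T' where
  toIsLabelledDag := h.isLabelledDag hT.toIsLabelledDag
  inDeg_le_one w hw := by
    obtain ⟨hwv, hw⟩ := h.mem_verts_iff.1 hw
    exact (h.inDeg_eq w hwv).trans_le (hT.inDeg_le_one w hw)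
  outDeg_le_two w hw := by
    obtain ⟨hwv, hw⟩ := h.mem_verts_iff.1 hw
    exact (h.outDeg_le w hwv).trans (hT.outDeg_le_two w hw)

lemma MulPretree.rStep (hT : MulPretree T) (hst : RStep S T T') : MulPretree T' :=
  have ⟨_, h⟩ := hT.removesNode hst
  h.mulPretree hT

lemma MulPretree.isReducedTree_of_terminal (hT : MulPretree T) (hterm : ∀ H, ¬ RStep S T H) :
    IsReducedTree S T where
  incident w hw := by
    cases hlab : T.label w with
    | some x =>
      have hin := (hT.isLeafNode_of_label w x hlab).2.1
      obtain ⟨u, -, hu⟩ := exists_mult_pos_of_inDeg_pos (G := T) (v := w) (by omega)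
      exact .inr ⟨u, hu⟩
    | none =>
      have hout := outDeg_ne_zero_of_terminal hterm hw hlab
      obtain ⟨u, -, hu⟩ := exists_mult_pos_of_outDeg_pos (G := T) (u := w) (by omega)
      exact .inl ⟨u, hu⟩
  label_of_isLeafNode w hw := by
    obtain ⟨x, hx⟩ := exists_label_of_terminal hterm hw
    exact ⟨x, hx, label_notMem_of_terminal hT.toIsLabelledDag hterm hx⟩
  two_children u w huw hleaf := by
    have hw := (hT.supported u w huw).2
    have hin : T.inDeg w = 1 :=
      le_antisymm (hT.inDeg_le_one w hw) (huw.trans_le (mult_le_inDeg_s15 (hT.supported u w huw).1))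
    have hlab : T.label w = none := by
      cases hlab : T.label w with
      | none => rfl
      | some x => exact absurd (hT.isLeafNode_of_label w x hlab) hleaf
    have h0 : T.outDeg w ≠ 0 := fun h0 => hleaf ⟨hw, hin, h0⟩
    have h1 := outDeg_ne_one_of_terminal hterm hw hlab hin
    have h2 := hT.outDeg_le_two w hw
    exact exists_adj_adj_ne (hT.mult_le_one w) (by omega)

end MulPretree

/-- The properties of a beaded tree on `X` that survive every restriction step by `S`. -/
structure BeadedPretree (X S : Finset ℕ) (G : DG) : Prop extends G.IsLabelledDag where
  inDeg_le_two : ∀ v ∈ G.verts, G.inDeg v ≤ 2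
  outDeg_le_two : ∀ v ∈ G.verts, G.outDeg v ≤ 2
  bead : ∀ v ∈ G.verts, G.inDeg v = 2 → ∃ u ∈ G.verts, G.mult u v = 2
  outDeg_le_one_of_inDeg_eq_two : ∀ v ∈ G.verts, G.inDeg v = 2 → G.outDeg v ≤ 1
  outDeg_le_one_of_inDeg_eq_zero : ∀ v ∈ G.verts, G.inDeg v = 0 → G.outDeg v ≤ 1
  label_mem : ∀ v x, G.label v = some x → x ∈ X
  label_injective : ∀ v w x, G.label v = some x → G.label w = some x → v = w
  exists_label : ∀ x ∈ X, x ∉ S → ∃ v, G.label v = some x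
  eq_of_inDeg_eq_zero :
    ∀ v ∈ G.verts, ∀ w ∈ G.verts, G.inDeg v = 0 → G.inDeg w = 0 → v = w

section BeadedPretree

variable {X S : Finset ℕ} {G G' : DG} {v : ℕ}

lemma BeadedPretree.of_isBeadedTree (hB : IsBeadedTree X G) : BeadedPretree X S G where
  supported := hB.1.supported
  acyclic := hB.1.acyclic
  isLeafNode_of_label v x hv := (hB.1.labels v).1 ⟨x, hv⟩
  inDeg_le_two v hv := by
    rcases hB.1.nodes v hv with ⟨-, h⟩ | ⟨-, h⟩ | ⟨-, h⟩ | ⟨-, h⟩ <;> omega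
  outDeg_le_two v hv := by
    rcases hB.1.nodes v hv with ⟨-, h⟩ | ⟨-, h⟩ | ⟨-, h⟩ | ⟨-, h⟩ <;> omega
  bead v hv h2 := by
    obtain ⟨u, hu⟩ := hB.2 v hv h2
    exact ⟨u, (hB.1.supported u v (show 0 < G.mult u v by omega)).1, hu⟩
  outDeg_le_one_of_inDeg_eq_two v hv h2 := by
    rcases hB.1.nodes v hv with ⟨-, h⟩ | ⟨-, h⟩ | ⟨-, h⟩ | ⟨-, h⟩ <;> omega
  outDeg_le_one_of_inDeg_eq_zero v hv h0 := by
    rcases hB.1.nodes v hv with ⟨-, h⟩ | ⟨-, h⟩ | ⟨-, h⟩ | ⟨-, h⟩ <;> omega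
  label_mem := hB.1.labelsSub
  label_injective v w x hv hw := by
    obtain ⟨u, -, hu⟩ := hB.1.labelsOnto x (hB.1.labelsSub v x hv)
    rw [hu v hv, hu w hw]
  exists_label x hx _ := (hB.1.labelsOnto x hx).exists
  eq_of_inDeg_eq_zero v hv w hw hv0 hw0 := by
    obtain ⟨r, -, hr⟩ := hB.1.root
    have root_of_inDeg_eq_zero : ∀ u ∈ G.verts, G.inDeg u = 0 → u = r := fun u hu hu0 => by
      rcases hB.1.nodes u hu with h | ⟨-, h⟩ | ⟨-, h⟩ | ⟨-, h⟩
      · exact hr u h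
      all_goals omega
    rw [root_of_inDeg_eq_zero v hv hv0, root_of_inDeg_eq_zero w hw hw0]

namespace RemovesNode

lemma beadedPretree (h : RemovesNode S G G' v) (hG : BeadedPretree X S G) :
    BeadedPretree X S G' where
  toIsLabelledDag := h.isLabelledDag hG.toIsLabelledDag
  inDeg_le_two w hw := by
    obtain ⟨hwv, hw⟩ := h.mem_verts_iff.1 hw
    exact (h.inDeg_eq w hwv).trans_le (hG.inDeg_le_two w hw)
  outDeg_le_two w hw := by
    obtain ⟨hwv, hw⟩ := h.mem_verts_iff.1 hw
    exact (h.outDeg_le w hwv).trans (hG.outDeg_le_two w hw)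
  bead w hw' h2 := by
    obtain ⟨hwv, hw⟩ := h.mem_verts_iff.1 hw'
    rw [h.inDeg_eq w hwv] at h2
    obtain ⟨u, hu, hu2⟩ := hG.bead w hw h2
    have huv : u ≠ v := by
      rintro rfl
      have := mult_le_outDeg_s15 (u := u) hw
      have := h.outDeg_le_one
      omega
    have hu' : u ∈ G'.verts := h.mem_verts_iff.2 ⟨huv, hu⟩
    refine ⟨u, hu', le_antisymm ?_ (hu2 ▸ h.mult_le u w huv hwv)⟩
    calc G'.mult u w ≤ G'.inDeg w := mult_le_inDeg_s15 hu'
      _ = 2 := by rw [h.inDeg_eq w hwv, h2]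
  outDeg_le_one_of_inDeg_eq_two w hw h2 := by
    obtain ⟨hwv, hw⟩ := h.mem_verts_iff.1 hw
    rw [h.inDeg_eq w hwv] at h2
    exact (h.outDeg_le w hwv).trans (hG.outDeg_le_one_of_inDeg_eq_two w hw h2)
  outDeg_le_one_of_inDeg_eq_zero w hw h0 := by
    obtain ⟨hwv, hw⟩ := h.mem_verts_iff.1 hw
    rw [h.inDeg_eq w hwv] at h0
    exact (h.outDeg_le w hwv).trans (hG.outDeg_le_one_of_inDeg_eq_zero w hw h0)
  label_mem w x hw := hG.label_mem w x (h.label_of_label hw)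
  label_injective w w' x hw hw' := hG.label_injective w w' x (h.label_of_label hw)
    (h.label_of_label hw')
  exists_label x hX hS := by
    obtain ⟨w, hw⟩ := hG.exists_label x hX hS
    have hwv : w ≠ v := by
      rintro rfl
      exact hS (h.label_mem x hw)
    exact ⟨w, (h.label_of_ne hwv).trans hw⟩
  eq_of_inDeg_eq_zero w hw w' hw' h0 h0' := by
    obtain ⟨hwv, hw⟩ := h.mem_verts_iff.1 hw
    obtain ⟨hwv', hw'⟩ := h.mem_verts_iff.1 hw'
    rw [h.inDeg_eq w hwv] at h0
    rw [h.inDeg_eq w' hwv'] at h0'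
    exact hG.eq_of_inDeg_eq_zero w hw w' hw' h0 h0'

lemma reticNum_le (h : RemovesNode S G G' v) (hG : BeadedPretree X S G) :
    G'.reticNum ≤ G.reticNum := by
  refine Finset.card_le_card fun w hw => ?_
  simp only [Finset.mem_filter] at hw ⊢
  obtain ⟨⟨hwv, hwG⟩, h2, h1⟩ := And.imp_left h.mem_verts_iff.1 hw
  rw [h.inDeg_eq w hwv] at h2
  have := h.outDeg_le w hwv
  have := hG.outDeg_le_one_of_inDeg_eq_two w hwG h2
  exact ⟨hwG, h2, by omega⟩

end RemovesNode

lemma BeadedPretree.rStep (hG : BeadedPretree X S G) (hst : RStep S G G') :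
    BeadedPretree X S G' ∧ G'.reticNum ≤ G.reticNum :=
  have ⟨_, h⟩ := hG.removesNode hst
  ⟨h.beadedPretree hG, h.reticNum_le hG⟩

lemma BeadedPretree.reflTransGen (hG : BeadedPretree X S G)
    (hsteps : Relation.ReflTransGen (RStep S) G G') :
    BeadedPretree X S G' ∧ G'.reticNum ≤ G.reticNum := by
  induction hsteps with
  | refl => exact ⟨hG, le_rfl⟩
  | tail _ hst ih =>
    obtain ⟨hG', hle⟩ := ih.1.rStep hst
    exact ⟨hG', hle.trans ih.2⟩

lemma BeadedPretree.nodes_of_terminal (hG : BeadedPretree X S G)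
    (hterm : ∀ H, ¬ RStep S G H) (hv : v ∈ G.verts) :
    G.IsRoot v ∨ G.IsTreeNode v ∨ G.IsRetic v ∨ G.IsLeafNode v := by
  cases hlab : G.label v with
  | some x => exact .inr (.inr (.inr (hG.isLeafNode_of_label v x hlab)))
  | none =>
    have h0 := outDeg_ne_zero_of_terminal hterm hv hlab
    have hout := hG.outDeg_le_two v hv
    have : G.inDeg v = 0 ∨ G.inDeg v = 1 ∨ G.inDeg v = 2 := by
      have := hG.inDeg_le_two v hv
      omega
    rcases this with hin | hin | hin
    · have := hG.outDeg_le_one_of_inDeg_eq_zero v hv hin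
      exact .inl ⟨hv, hin, by omega⟩
    · have := outDeg_ne_one_of_terminal hterm hv hlab hin
      exact .inr (.inl ⟨hv, hin, by omega⟩)
    · have := hG.outDeg_le_one_of_inDeg_eq_two v hv hin
      exact .inr (.inr (.inl ⟨hv, hin, by omega⟩))

lemma BeadedPretree.isBeadedTree_of_terminal (hG : BeadedPretree X S G)
    (hterm : ∀ H, ¬ RStep S G H) (hX : ∃ x ∈ X, x ∉ S) : IsBeadedTree (X \ S) G := by
  obtain ⟨x, hxX, hxS⟩ := hX
  obtain ⟨u, hu⟩ := hG.exists_label x hxX hxS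
  obtain ⟨r, hr, hr0, -⟩ := exists_inDeg_eq_zero_reaches hG.supported hG.acyclic
    (hG.isLeafNode_of_label u x hu).1
  have hroot : G.IsRoot r := by
    rcases hG.nodes_of_terminal hterm hr with h | ⟨-, h⟩ | ⟨-, h⟩ | ⟨-, h⟩
    · exact h
    all_goals omega
  refine ⟨⟨⟨r, hroot, fun r' hr' => hG.eq_of_inDeg_eq_zero r' hr'.1 r hr hr'.2.1 hr0⟩,
    fun v hv => hG.nodes_of_terminal hterm hv, hG.acyclic, hG.supported,
    fun v => ⟨fun ⟨x, hx⟩ => hG.isLeafNode_of_label v x hx, exists_label_of_terminal hterm⟩,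
    fun v x hx => Finset.mem_sdiff.2 ⟨hG.label_mem v x hx,
      label_notMem_of_terminal hG.toIsLabelledDag hterm hx⟩,
    fun x hx => ?_⟩, fun v hv h2 => ?_⟩
  · obtain ⟨hxX, hxS⟩ := Finset.mem_sdiff.1 hx
    obtain ⟨v, hv⟩ := hG.exists_label x hxX hxS
    exact ⟨v, hv, fun w hw => hG.label_injective w v x hw hv⟩
  · obtain ⟨u, -, hu⟩ := hG.bead v hv h2
    exact ⟨u, hu⟩

end BeadedPretree

section Walks

variable {G : DG} {a b c d : ℕ} {e f : Arc} {l l' : List Arc}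

lemma isWalk_singleton : G.IsWalk [e] a b ↔ G.ArcOK e ∧ e.1 = a ∧ e.2.1 = b := by
  unfold IsWalk
  show _ ∧ _ ∧ List.IsChain _ _ ∧ _ ↔ _
  simp

lemma isWalk_cons_cons :
    G.IsWalk (e :: f :: l) a b ↔ e.1 = a ∧ G.ArcOK e ∧ G.IsWalk (f :: l) e.2.1 b := by
  unfold IsWalk
  show _ ∧ _ ∧ List.IsChain _ _ ∧ _ ↔ _ ∧ _ ∧ _ ∧ _ ∧ List.IsChain _ _ ∧ _
  simp only [List.isChain_cons_cons, List.mem_cons, forall_eq_or_imp, List.head?_cons,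
    Option.map_some, Option.some_inj, List.getLast?_cons_cons, ne_eq, reduceCtorEq,
    not_false_eq_true, true_and, eq_comm (a := f.1)]
  tauto

lemma IsWalk.cons (he : G.ArcOK e) (hea : e.2.1 = a) (h : G.IsWalk l a b) :
    G.IsWalk (e :: l) e.1 b := by
  obtain _ | ⟨f, l⟩ := l
  · exact absurd rfl h.1
  · exact isWalk_cons_cons.2 ⟨rfl, he, hea ▸ h⟩

lemma IsWalk.append (h : G.IsWalk l a b) (h' : G.IsWalk l' b c) : G.IsWalk (l ++ l') a c := by
  induction l generalizing a with
  | nil => exact absurd rfl h.1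
  | cons e l ih =>
    cases l with
    | nil =>
      obtain ⟨hok, rfl, rfl⟩ := isWalk_singleton.1 h
      exact h'.cons hok rfl
    | cons f l =>
      obtain ⟨rfl, hok, hw⟩ := isWalk_cons_cons.1 h
      exact isWalk_cons_cons.2 ⟨rfl, hok, ih hw⟩

lemma IsWalk.head_fst (h : G.IsWalk (e :: l) a b) : e.1 = a := by
  simpa using h.2.2.2.1

lemma IsWalk.arcOK_head (h : G.IsWalk (e :: l) a b) : G.ArcOK e :=
  h.2.1 e List.mem_cons_self

lemma IsWalk.exists_head_s15 (h : G.IsWalk l a b) :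
    ∃ e, l.head? = some e ∧ e.1 = a ∧ G.ArcOK e := by
  obtain _ | ⟨e, l⟩ := l
  · exact absurd rfl h.1
  · exact ⟨e, rfl, h.head_fst, h.arcOK_head⟩

lemma ArcOK.outDeg_pos (hG : G.Supported) (he : G.ArcOK e) : 0 < G.outDeg e.1 :=
  (Nat.zero_lt_of_lt he).trans_le (mult_le_outDeg_s15 (hG _ _ (Nat.zero_lt_of_lt he)).2)

lemma IsWalk.outDeg_pos (hG : G.Supported) (h : G.IsWalk l a b) : 0 < G.outDeg a := by
  obtain ⟨e, -, rfl, he⟩ := h.exists_head_s15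
  exact he.outDeg_pos hG

lemma two_le_outDeg_of_arcOK (hG : G.Supported) (he : G.ArcOK e) (hf : G.ArcOK f)
    (hsrc : e.1 = f.1) (hne : e ≠ f) : 2 ≤ G.outDeg e.1 := by
  obtain ⟨a, t, k⟩ := e
  obtain ⟨a', t', k'⟩ := f
  dsimp only at hsrc
  subst hsrc
  unfold ArcOK at he hf
  dsimp only at he hf ⊢
  have ht : t ∈ G.verts := (hG a t (Nat.zero_lt_of_lt he)).2
  by_cases htt : t = t'
  · subst htt
    have hk : k ≠ k' := fun hk => hne (by rw [hk])
    have := mult_le_outDeg_s15 (u := a) ht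
    omega
  · have := mult_add_mult_le_outDeg_s15 (u := a) ht (hG a t' (Nat.zero_lt_of_lt hf)).2 htt
    omega

lemma IsWalk.deleteNode (hG : G.Supported) (hd : G.outDeg d = 0) (hb : b ≠ d)
    (h : G.IsWalk l a b) : (G.deleteNode d).IsWalk l a b := by
  -- every arc of the walk leaves a node of positive out-degree and enters either the
  -- start of the next arc or `b`
  have havoid : ∀ e ∈ l, e.1 ≠ d ∧ e.2.1 ≠ d := by
    induction l generalizing a with
    | nil => simp
    | cons e l ih =>
      have hsrc : e.1 ≠ d := fun hed => by
        have := h.arcOK_head.outDeg_pos hG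
        rw [hed] at this
        omega
      cases l with
      | nil =>
        obtain ⟨-, -, rfl⟩ := isWalk_singleton.1 h
        simpa using ⟨hsrc, hb⟩
      | cons f l =>
        obtain ⟨-, -, hw⟩ := isWalk_cons_cons.1 h
        refine List.forall_mem_cons.2 ⟨⟨hsrc, fun hed => ?_⟩, ih hw⟩
        have := hw.outDeg_pos hG
        rw [hed] at this
        omega
  obtain ⟨hne, hok, hch, hh, hl⟩ := h
  refine ⟨hne, fun e he => ?_, hch, hh, hl⟩
  unfold ArcOK
  rw [deleteNode_mult (havoid e he).1 (havoid e he).2]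
  exact hok e he

end Walks

/-- `G.mult p c` is the index of the copy of `p → c` created by the suppression of `v`, so the
new arc differs from every arc of `G`. -/
def suppressArc (G : DG) (v p c : ℕ) (e : Arc) : Arc :=
  if e.1 = v then (p, c, G.mult p c) else e

def suppressWalk (G : DG) (v p c : ℕ) (l : List Arc) : List Arc :=
  (l.filter fun e => e.2.1 ≠ v).map (G.suppressArc v p c)

section SuppressWalk

variable {G : DG} {v p c a b : ℕ} {e : Arc} {l l' : List Arc}

lemma suppressWalk_cons_of_eq (h : e.2.1 = v) :
    G.suppressWalk v p c (e :: l) = G.suppressWalk v p c l := by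
  simp [suppressWalk, h]

lemma suppressWalk_cons_of_ne (h : e.2.1 ≠ v) :
    G.suppressWalk v p c (e :: l) =
      G.suppressArc v p c e :: G.suppressWalk v p c l := by
  simp [suppressWalk, h]

lemma suppressArc_fst : (G.suppressArc v p c e).1 = if e.1 = v then p else e.1 := by
  unfold suppressArc
  split_ifs <;> rfl

lemma ArcOK.ne_fresh (he : G.ArcOK e) : e ≠ (a, b, G.mult a b) := by
  rintro rfl
  exact lt_irrefl _ he

lemma arcOK_suppressNode (he : G.ArcOK e) (h1 : e.1 ≠ v) (h2 : e.2.1 ≠ v) :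
    (G.suppressNode v p c).ArcOK e :=
  he.trans_le (by rw [suppressNode_mult h1 h2]; exact Nat.le_add_right _ _)

namespace Suppressible

lemma arc_in_eq (H : Suppressible G v p c) (he : G.ArcOK e) (hev : e.2.1 = v) :
    e = (p, v, 0) := by
  obtain ⟨a, t, k⟩ := e
  dsimp only at hev
  subst hev
  unfold ArcOK at he
  obtain rfl : a = p := by
    by_contra hap
    have := H.mult_in_eq_zero hap
    dsimp only at he
    omega
  have := H.mult_in
  dsimp only at he
  obtain rfl : k = 0 := by omega
  rfl

lemma arc_out_eq (H : Suppressible G v p c) (he : G.ArcOK e) (hev : e.1 = v) :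
    e = (v, c, 0) := by
  obtain ⟨a, t, k⟩ := e
  dsimp only at hev
  subst hev
  unfold ArcOK at he
  obtain rfl : t = c := by
    by_contra htc
    have := H.mult_out_eq_zero htc
    dsimp only at he
    omega
  have := H.mult_out
  dsimp only at he
  obtain rfl : k = 0 := by omega
  rfl

lemma arcOK_fresh (H : Suppressible G v p c) :
    (G.suppressNode v p c).ArcOK (p, c, G.mult p c) := by
  unfold ArcOK
  dsimp only
  rw [suppressNode_mult H.parent_ne H.ne_child.symm]
  simp

lemma suppressArc_snd (H : Suppressible G v p c) (he : G.ArcOK e) :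
    (G.suppressArc v p c e).2.1 = e.2.1 := by
  unfold suppressArc
  split_ifs with hev
  · rw [H.arc_out_eq he hev]
  · rfl

lemma arcOK_suppressArc (H : Suppressible G v p c) (he : G.ArcOK e) (hev : e.2.1 ≠ v) :
    (G.suppressNode v p c).ArcOK (G.suppressArc v p c e) := by
  unfold suppressArc
  split_ifs with he1
  exacts [H.arcOK_fresh, arcOK_suppressNode he he1 hev]

lemma isWalk_suppressWalk (H : Suppressible G v p c) (hw : G.IsWalk l a b) (hb : b ≠ v) :
    (G.suppressNode v p c).IsWalk (G.suppressWalk v p c l) (if a = v then p else a) b := by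
  induction l generalizing a with
  | nil => exact absurd rfl hw.1
  | cons e l ih =>
    have hok := hw.arcOK_head
    obtain rfl := hw.head_fst
    cases l with
    | nil =>
      obtain ⟨-, -, rfl⟩ := isWalk_singleton.1 hw
      rw [suppressWalk_cons_of_ne hb, suppressWalk, List.filter_nil, List.map_nil,
        isWalk_singleton, suppressArc_fst]
      exact ⟨H.arcOK_suppressArc hok hb, rfl, H.suppressArc_snd hok⟩
    | cons f l =>
      obtain ⟨-, -, hw'⟩ := isWalk_cons_cons.1 hw
      by_cases hev : e.2.1 = v
      · have := ih hw'
        rw [if_pos hev] at this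
        rw [suppressWalk_cons_of_eq hev, H.arc_in_eq hok hev, if_neg H.parent_ne]
        exact this
      · have := ih hw'
        rw [if_neg hev] at this
        rw [suppressWalk_cons_of_ne hev, ← suppressArc_fst]
        exact this.cons (H.arcOK_suppressArc hok hev) (H.suppressArc_snd hok)

lemma head_suppressWalk (H : Suppressible G v p c) (hw : G.IsWalk (e :: l) a b)
    (ha : a ≠ v) (hb : b ≠ v) :
    (G.suppressWalk v p c (e :: l)).head? = some (if e.2.1 = v then (p, c, G.mult p c) else e) := by
  obtain rfl := hw.head_fst
  by_cases hev : e.2.1 = v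
  · obtain _ | ⟨f, l⟩ := l
    · exact absurd ((isWalk_singleton.1 hw).2.2 ▸ hev) hb
    · obtain ⟨-, -, hw'⟩ := isWalk_cons_cons.1 hw
      have hf := H.arc_out_eq hw'.arcOK_head (hw'.head_fst.trans hev)
      rw [suppressWalk_cons_of_eq hev, hf, suppressWalk_cons_of_ne H.ne_child.symm, if_pos hev]
      simp [suppressArc]
  · rw [suppressWalk_cons_of_ne hev, if_neg hev]
    simp [suppressArc, ha]

lemma head_suppressWalk_ne (H : Suppressible G v p c) {b' : ℕ} (hw : G.IsWalk l a b)
    (hw' : G.IsWalk l' a b') (ha : a ≠ v) (hb : b ≠ v) (hb' : b' ≠ v)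
    (hne : l.head? ≠ l'.head?) :
    (G.suppressWalk v p c l).head? ≠ (G.suppressWalk v p c l').head? := by
  obtain _ | ⟨e, l⟩ := l
  · exact absurd rfl hw.1
  obtain _ | ⟨e', l'⟩ := l'
  · exact absurd rfl hw'.1
  have hee' : e ≠ e' := fun h => hne (by rw [h]; rfl)
  rw [H.head_suppressWalk hw ha hb, H.head_suppressWalk hw' ha hb', Ne, Option.some_inj]
  split_ifs with h1 h2 h2
  · exact absurd ((H.arc_in_eq hw.arcOK_head h1).trans (H.arc_in_eq hw'.arcOK_head h2).symm) hee'
  · exact hw'.arcOK_head.ne_fresh.symm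
  · exact hw.arcOK_head.ne_fresh
  · exact hee'

end Suppressible

end SuppressWalk

section NetworkSide

variable {S : Finset ℕ} {T N N' : DG} {h : ℕ → ℕ} {hE : ℕ → ℕ → List Arc}
  {u w x y y' v p c : ℕ}

lemma IsLeafNode.exists_adj (hw : T.IsLeafNode w) : ∃ u, T.Adj u w :=
  have ⟨u, _, hu⟩ := exists_mult_pos_of_inDeg_pos (G := T) (v := w) (hw.2.1 ▸ one_pos)
  ⟨u, hu⟩

lemma WeakEmbedding.two_le_outDeg (he : WeakEmbedding T N h hE) (hN : N.Supported)
    (hy : T.Adj x y) (hy' : T.Adj x y') (hne : y ≠ y') : 2 ≤ N.outDeg (h x) := by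
  obtain ⟨e, he1, hex, hok⟩ := (he.2.2.1 x y hy).exists_head_s15
  obtain ⟨e', he1', hex', hok'⟩ := (he.2.2.1 x y' hy').exists_head_s15
  have hee' : e ≠ e' := fun hee' => he.2.2.2 x y y' hy hy' hne (by rw [he1, he1', hee'])
  exact hex ▸ two_le_outDeg_of_arcOK hN hok hok' (hex.trans hex'.symm) hee'

/-- The removed node has at most one child and no label outside `S`, so it is the image
neither of a leaf nor of a node with two children. -/
lemma RemovesNode.map_ne_of_adj (hR : RemovesNode S N N' v) (hN : N.Supported)
    (hT : IsReducedTree S T) (he : WeakEmbedding T N h hE) (huw : T.Adj u w) : h w ≠ v := by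
  intro hwv
  by_cases hleaf : T.IsLeafNode w
  · obtain ⟨x, hx, hxS⟩ := hT.label_of_isLeafNode w hleaf
    have hlab := (he.2.1 w hleaf).2
    rw [hx, hwv] at hlab
    exact hxS (hR.label_mem x hlab)
  · obtain ⟨y, y', hy, hy', hne⟩ := hT.two_children u w huw hleaf
    have := he.two_le_outDeg hN hy hy' hne
    have := hR.outDeg_le_one
    rw [hwv] at *
    omega

lemma RemovesNode.map_isLeafNode (hR : RemovesNode S N N' v) (he : WeakEmbedding T N h hE)
    (hw : T.IsLeafNode w) (hwv : h w ≠ v) : N'.IsLeafNode (h w) ∧ N'.label (h w) = T.label w :=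
  ⟨hR.isLeafNode (he.2.1 w hw).1 hwv, (hR.label_of_ne hwv).trans (he.2.1 w hw).2⟩

lemma WeakEmbedding.deleteNode (he : WeakEmbedding T N h hE) (hN : N.Supported)
    (hR : RemovesNode S N (N.deleteNode v) v) (hd : N.outDeg v = 0) (hT : IsReducedTree S T) :
    WeakEmbedding T (N.deleteNode v) h hE := by
  have hch : ∀ u w, T.Adj u w → h w ≠ v := fun u w huw => hR.map_ne_of_adj hN hT he huw
  have hpar : ∀ u w, T.Adj u w → h u ≠ v := fun u w huw huv => by
    have := (he.2.2.1 u w huw).outDeg_pos hN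
    rw [huv] at this
    omega
  refine ⟨fun w hw => Finset.mem_erase.2 ⟨?_, he.1 w hw⟩, fun w hw => ?_,
    fun u w huw => (he.2.2.1 u w huw).deleteNode hN hd (hch u w huw), he.2.2.2⟩
  · rcases hT.incident w hw with ⟨u, hu⟩ | ⟨u, hu⟩
    exacts [hpar w u hu, hch u w hu]
  · obtain ⟨u, hu⟩ := hw.exists_adj
    exact hR.map_isLeafNode he hw (hch u w hu)

/-- Only the image of the root of `T` can be the suppressed node; it is moved to `p`. -/
lemma WeakEmbedding.suppressNode (he : WeakEmbedding T N h hE) (H : Suppressible N v p c)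
    (hR : RemovesNode S N (N.suppressNode v p c) v) (hT : IsReducedTree S T) :
    WeakEmbedding T (N.suppressNode v p c) (fun u => if h u = v then p else h u)
      (fun u w => N.suppressWalk v p c (hE u w)) := by
  have hch : ∀ u w, T.Adj u w → h w ≠ v := fun u w huw =>
    hR.map_ne_of_adj H.supported hT he huw
  refine ⟨fun w hw => ?_, fun w hw => ?_, fun u w huw => ?_, fun x y y' hy hy' hne => ?_⟩
  · dsimp only
    split_ifs with hwv
    exacts [hR.mem_verts_iff.2 ⟨H.parent_ne, H.parent_mem⟩,
      hR.mem_verts_iff.2 ⟨hwv, he.1 w hw⟩]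
  · obtain ⟨u, hu⟩ := hw.exists_adj
    simpa only [if_neg (hch u w hu)] using hR.map_isLeafNode he hw (hch u w hu)
  · simpa only [if_neg (hch u w huw)] using H.isWalk_suppressWalk (he.2.2.1 u w huw) (hch u w huw)
  · have hx : h x ≠ v := fun hxv => by
      have := he.two_le_outDeg H.supported hy hy' hne
      rw [hxv, H.outDeg_eq_one] at this
      omega
    exact H.head_suppressWalk_ne (he.2.2.1 x y hy) (he.2.2.1 x y' hy') hx (hch x y hy)
      (hch x y' hy') (he.2.2.2 x y y' hy hy' hne)

lemma Displays.rStep (hN : N.IsLabelledDag) (hT : IsReducedTree S T) (hst : RStep S N N')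
    (hd : N.Displays T) : N'.Displays T := by
  obtain ⟨h, hE, he⟩ := hd
  cases hst with
  | del v hv hcase =>
    have hout := outDeg_eq_zero_of_del hN hcase
    exact ⟨h, hE, he.deleteNode hN.supported
      (removesNode_deleteNode hN.supported hv hout (label_mem_of_del hcase)) hout hT⟩
  | suppress v p c hv hlab hpv hin hvc hout =>
    have H : Suppressible N v p c := ⟨hN.supported, hN.acyclic, hv, hpv, hin, hvc, hout⟩
    exact ⟨_, _, he.suppressNode H (H.removesNode hlab) hT⟩

lemma Displays.reflTransGen (hN : N.IsLabelledDag) (hT : IsReducedTree S T)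
    (hsteps : Relation.ReflTransGen (RStep S) N N') (hd : N.Displays T) : N'.Displays T := by
  suffices N'.IsLabelledDag ∧ N'.Displays T from this.2
  induction hsteps with
  | refl => exact ⟨hN, hd⟩
  | tail _ hst ih => exact ⟨ih.1.rStep hst, ih.2.rStep ih.1 hT hst⟩

end NetworkSide

/-- A weak embedding in which only the labelled leaves of `T` must go to leaves: restricting `T`
creates unlabelled leaves, which are deleted later. -/
structure LooseEmbedding (T N : DG) (h : ℕ → ℕ) (hE : ℕ → ℕ → List Arc) : Prop where
  map_mem : ∀ v ∈ T.verts, h v ∈ N.verts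
  map_label : ∀ v x, T.label v = some x → N.IsLeafNode (h v) ∧ N.label (h v) = some x
  isWalk : ∀ u v, T.Adj u v → N.IsWalk (hE u v) (h u) (h v)
  head_ne : ∀ x y y', T.Adj x y → T.Adj x y' → y ≠ y' → (hE x y).head? ≠ (hE x y').head?

section TreeSide

variable {S : Finset ℕ} {T T' N : DG} {h : ℕ → ℕ} {hE : ℕ → ℕ → List Arc}
  {v p c : ℕ}

lemma WeakEmbedding.looseEmbedding (hT : T.IsLabelledDag) (he : WeakEmbedding T N h hE) :
    LooseEmbedding T N h hE where
  map_mem := he.1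
  map_label v x hx :=
    have hleaf := he.2.1 v (hT.isLeafNode_of_label v x hx)
    ⟨hleaf.1, hleaf.2.trans hx⟩
  isWalk := he.2.2.1
  head_ne := he.2.2.2

lemma LooseEmbedding.weakEmbedding (he : LooseEmbedding T N h hE)
    (hT : ∀ w, T.IsLeafNode w → ∃ x, T.label w = some x) : WeakEmbedding T N h hE := by
  refine ⟨he.map_mem, fun w hw => ?_, he.isWalk, he.head_ne⟩
  obtain ⟨x, hx⟩ := hT w hw
  obtain ⟨hleaf, hlab⟩ := he.map_label w x hx
  exact ⟨hleaf, hlab.trans hx.symm⟩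

lemma LooseEmbedding.deleteNode (he : LooseEmbedding T N h hE) :
    LooseEmbedding (T.deleteNode v) N h hE where
  map_mem w hw := he.map_mem w (Finset.mem_of_mem_erase hw)
  map_label w x hx := by
    change (if w = v then none else T.label w) = some x at hx
    split_ifs at hx
    exact he.map_label w x hx
  isWalk u w huw := he.isWalk u w (deleteNode_adj huw).1
  head_ne x y y' hy hy' := he.head_ne x y y' (deleteNode_adj hy).1 (deleteNode_adj hy').1

lemma LooseEmbedding.suppressNode (he : LooseEmbedding T N h hE) (hpv : T.Adj p v)
    (hvc : T.Adj v c) : LooseEmbedding (T.suppressNode v p c) N h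
      (fun a b => if a = p ∧ b = c then hE p v ++ hE v c else hE a b) where
  map_mem w hw := he.map_mem w (Finset.mem_of_mem_erase hw)
  map_label w x hx := by
    change (if w = v then none else T.label w) = some x at hx
    split_ifs at hx
    exact he.map_label w x hx
  isWalk u w huw := by
    split_ifs with hpc
    · obtain ⟨rfl, rfl⟩ := hpc
      exact (he.isWalk u v hpv).append (he.isWalk v w hvc)
    · exact he.isWalk u w ((suppressNode_adj huw).resolve_right hpc)
  head_ne x y y' hy hy' hne := by
    -- the lift of a child `y` of `x` in the suppressed tree to a child of `x` in `T`
    have hlift : ∀ y, (T.suppressNode v p c).Adj x y →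
        T.Adj x (if x = p ∧ y = c then v else y) ∧
        (if x = p ∧ y = c then hE p v ++ hE v c else hE x y).head? =
          (hE x (if x = p ∧ y = c then v else y)).head? := fun y hy => by
      split_ifs with hpc
      · obtain ⟨rfl, rfl⟩ := hpc
        exact ⟨hpv, List.head?_append_of_ne_nil _ (he.isWalk x v hpv).1⟩
      · exact ⟨(suppressNode_adj hy).resolve_right hpc, rfl⟩
    have hyv := (suppressNode_adj_ne hy).2
    have hy'v := (suppressNode_adj_ne hy').2
    rw [(hlift y hy).2, (hlift y' hy').2]
    refine he.head_ne x _ _ (hlift y hy).1 (hlift y' hy').1 ?_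
    split_ifs with h1 h2 h2
    exacts [absurd (h1.2.trans h2.2.symm) hne, hy'v.symm, hyv, hne]

lemma LooseEmbedding.rStep (hst : RStep S T T') (he : LooseEmbedding T N h hE) :
    ∃ h' hE', LooseEmbedding T' N h' hE' := by
  cases hst with
  | del v _ _ => exact ⟨h, hE, he.deleteNode⟩
  | suppress v p c _ _ hpv _ hvc _ =>
    exact ⟨h, _, he.suppressNode (show 0 < T.mult p v by omega) (show 0 < T.mult v c by omega)⟩

lemma MulPretree.displays_of_restricts (hT : MulPretree T) (hres : Restricts S T T')
    (hd : N.Displays T) : N.Displays T' ∧ IsReducedTree S T' := by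
  obtain ⟨hsteps, hterm⟩ := hres
  obtain ⟨h, hE, he⟩ := hd
  suffices MulPretree T' ∧ ∃ h' hE', LooseEmbedding T' N h' hE' by
    obtain ⟨hT', h', hE', he'⟩ := this
    exact ⟨⟨h', hE', he'.weakEmbedding fun w hw => exists_label_of_terminal hterm hw⟩,
      hT'.isReducedTree_of_terminal hterm⟩
  clear hterm
  induction hsteps with
  | refl => exact ⟨hT, h, hE, he.looseEmbedding hT.toIsLabelledDag⟩
  | tail _ hst ih =>
    obtain ⟨hT', h', hE', he'⟩ := ih
    exact ⟨hT'.rStep hst, he'.rStep hst⟩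

end TreeSide

end DG

theorem restriction_is_beaded_solution_general (X : Finset ℕ) (Ts : Set DG) (B : DG)
    (hT : ∀ T ∈ Ts, DG.IsMulTree X T)
    (hB : DG.Solution X Ts B)
    (S : Finset ℕ) (hSsub : S ⊆ X) (hSpr : S ≠ X) :
    (∃ B' : DG, DG.Restricts S B B') ∧
    (∀ B' : DG, DG.Restricts S B B' →
      DG.IsBeadedTree (X \ S) B' ∧ (∀ T' ∈ DG.SetRestrict S Ts, B'.Displays T') ∧
      B'.reticNum ≤ B.reticNum) := by
  obtain ⟨hBeaded, hdisp⟩ := hB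
  have hB0 : DG.BeadedPretree X S B := .of_isBeadedTree hBeaded
  refine ⟨DG.exists_restricts S B, fun B' ⟨hsteps, hterm⟩ => ?_⟩
  obtain ⟨hB', hretic⟩ := hB0.reflTransGen hsteps
  have hX : ∃ x ∈ X, x ∉ S :=
    Finset.exists_of_ssubset (Finset.ssubset_iff_subset_ne.2 ⟨hSsub, hSpr⟩)
  refine ⟨hB'.isBeadedTree_of_terminal hterm hX, fun T' ⟨_, T, hT0, hres⟩ => ?_, hretic⟩
  obtain ⟨hdisp', hred⟩ :=
    (DG.MulPretree.of_isMulTree (hT T hT0)).displays_of_restricts hres (hdisp T hT0)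
  exact hdisp'.reflTransGen hB0.toIsLabelledDag hred hsteps

/-- if `B` is a beaded tree on `X` weakly displaying every tree
in `𝒯` and `S` is a nonempty proper subset of `X`, then `B ∖ S` exists, and it
is a beaded tree on `X ∖ S` weakly displaying every MUL-tree in `𝒯 ∖ S` whose
reticulation number is at most that of `B`. -/
theorem restriction_is_beaded_solution (X : Finset ℕ) (Ts : Set DG) (B : DG)
    (hT : ∀ T ∈ Ts, DG.IsMulTree X T)
    (hB : DG.Solution X Ts B)
    (S : Finset ℕ) (hSsub : S ⊆ X) (hSne : S.Nonempty) (hSpr : S ≠ X) :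
    (∃ B' : DG, DG.Restricts S B B') ∧
    (∀ B' : DG, DG.Restricts S B B' →
      DG.IsBeadedTree (X \ S) B' ∧ (∀ T' ∈ DG.SetRestrict S Ts, B'.Displays T') ∧
      B'.reticNum ≤ B.reticNum) :=
  restriction_is_beaded_solution_general X Ts B hT hB S hSsub hSpr
end
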